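/- arXiv:1611.01732 — 5 statements merged into one kernel-verified Lean document; each statement's English description precedes it below -/
import Mathlib

section
/- For the noise-free Hegselmann–Krause model, for every initial opinion vector x(0) ∈ ℝ^n there exist a finite time T and real numbers x_1*, …, x_n* such that x_i(t) = x_i* for all t ≥ T and all i, and for every pair i, j either x_i* = x_j* or |x_i* − x_j*| > ε. -/
/-- Neighbor set of agent `i` in the Hegselmann–Krause model with confidence threshold `ε`. -/
noncomputable def hkNbr {n : ℕ} (ε : ℝ) (x : Fin n → ℝ) (i : Fin n) : Finset (Fin n) :=
  Finset.univ.filter fun j => |x j - x i| ≤ ε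

/-!
The truncated energy `∑ i, ∑ j, min ((x j - x i) ^ 2) (ε ^ 2)` drops along the dynamics by at
least four times the squared length of each step, so the steps are square-summable and eventually
shorter than any `δ > 0`. The minimum opinion is nondecreasing, hence converges to some `c`. Once it
is within `δ / n` of `c` and all steps are shorter than `δ`, no agent can sit in the band
`[c + 2δ, c + ε - 2δ]` (it would lift every opinion above `c`), so the agents below the band stay
below it, and none of them sees an agent above the band (that would lift it across the band).
Unless the opinions at some time lie pairwise within `ε` (and agree one step later), this splits the
agents into two nonempty groups that never interact again, and induction on the number of agents
applies to each group. Distinct opinions more than `ε` apart form a fixed point.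
-/

open Finset Filter Topology

namespace HegselmannKrause

variable {ι : Type*} {ε : ℝ}

theorem summable_of_add_le {E a : ℕ → ℝ} (hE : ∀ t, 0 ≤ E t) (ha : ∀ t, 0 ≤ a t)
    (h : ∀ t, E (t + 1) + a t ≤ E t) : Summable a := by
  refine summable_of_sum_range_le ha (c := E 0) fun T => ?_
  have hpartial : ∀ T, E T + ∑ t ∈ range T, a t ≤ E 0 := fun T => by
    induction T with
    | zero => simp
    | succ T ih => rw [sum_range_succ]; linarith [h T]
  linarith [hpartial T, hE T]

theorem lt_iff_lt_of_abs_sub_lt {y : ℕ → ℝ} {a b : ℝ} (hjump : ∀ t, |y (t + 1) - y t| < b - a)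
    (hgap : ∀ t, y t < a ∨ b < y t) (t : ℕ) : y t < a ↔ y 0 < a := by
  induction t with
  | zero => rfl
  | succ t ih =>
    rw [← ih]
    have := abs_lt.1 (hjump t)
    rcases hgap t with h | h <;> rcases hgap (t + 1) with h' | h' <;>
      constructor <;> intro <;> linarith

theorem min_sq_add_ite_mul_le (hε : 0 ≤ ε) (a a' : ℝ) :
    min (a' ^ 2) (ε ^ 2) + (if |a| ≤ ε then 1 else 0) * (a ^ 2 - a' ^ 2) ≤ min (a ^ 2) (ε ^ 2) := by
  split_ifs with h
  · rw [min_eq_left (sq_le_sq' (abs_le.1 h).1 (abs_le.1 h).2)]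
    linarith [min_le_left (a' ^ 2) (ε ^ 2)]
  · have hεa : ε ^ 2 ≤ a ^ 2 := by
      rw [← sq_abs a]; exact pow_le_pow_left₀ hε (not_le.1 h).le 2
    rw [min_eq_right hεa]
    linarith [min_le_right (a' ^ 2) (ε ^ 2)]

def IsSeparated (ε : ℝ) (x : ι → ℝ) : Prop :=
  ∀ i j, x i = x j ∨ ε < |x i - x j|

def IsIsolated (ε : ℝ) (p : ι → Prop) (x : ι → ℝ) : Prop :=
  ∀ i j, p i → ¬p j → ε < |x j - x i|

theorem IsIsolated.not {p : ι → Prop} {x : ι → ℝ} (h : IsIsolated ε p x) :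
    IsIsolated ε (fun i => ¬p i) x := fun i j hi hj => by
  rw [abs_sub_comm]; exact h j i (not_not.1 hj) hi

theorem IsIsolated.isSeparated_of_subtype {p : ι → Prop} {x : ι → ℝ} (hiso : IsIsolated ε p x)
    (hp : IsSeparated ε fun a : {i // p i} => x a)
    (hnp : IsSeparated ε fun a : {i // ¬p i} => x a) : IsSeparated ε x := by
  intro i j
  by_cases hi : p i <;> by_cases hj : p j
  · exact hp ⟨i, hi⟩ ⟨j, hj⟩
  · exact Or.inr (by rw [abs_sub_comm]; exact hiso i j hi hj)
  · exact Or.inr (hiso j i hj hi)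
  · exact hnp ⟨i, hi⟩ ⟨j, hj⟩

variable [Fintype ι]

-- `havg` says that `u'` is the `A`-weighted average of `u`.
theorem sum_mul_sq_sub_sq_eq (A : ι → ι → ℝ) (hA : ∀ i j, A i j = A j i) (u u' : ι → ℝ)
    (havg : ∀ i, ∑ j, A i j * (u j - u i) = (∑ j, A i j) * (u' i - u i)) :
    ∑ i, ∑ j, A i j * ((u j - u i) ^ 2 - (u' j - u' i) ^ 2) =
      ∑ i, ∑ j, A i j * ((u' i - u i) + (u' j - u j)) ^ 2 := by
  set g : ι → ι → ℝ := fun i j => 2 * A i j * ((u' i - u i) ^ 2 + (u i - u j) * (u' i - u i))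
  have hg : ∀ i, ∑ j, g i j = 0 := fun i => calc
    ∑ j, g i j = 2 * (u' i - u i) *
        ((∑ j, A i j) * (u' i - u i) - ∑ j, A i j * (u j - u i)) := by
      rw [mul_sub, sum_mul, mul_sum, mul_sum, ← sum_sub_distrib]
      exact sum_congr rfl fun j _ => by ring
    _ = 0 := by rw [havg, sub_self, mul_zero]
  rw [← sub_eq_zero, ← sum_sub_distrib]
  calc ∑ i, (∑ j, A i j * ((u j - u i) ^ 2 - (u' j - u' i) ^ 2) -
        ∑ j, A i j * ((u' i - u i) + (u' j - u j)) ^ 2)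
      = -∑ i, ∑ j, (g i j + g j i) := by
        rw [← sum_neg_distrib]
        refine sum_congr rfl fun i _ => ?_
        rw [← sum_sub_distrib, ← sum_neg_distrib]
        refine sum_congr rfl fun j _ => ?_
        simp only [g, hA j i]; ring
    _ = 0 := by
        have hswap : ∑ i, ∑ j, g j i = ∑ i, ∑ j, g i j := sum_comm
        simp only [sum_add_distrib, hswap, hg, sum_const_zero, add_zero, neg_zero]

noncomputable def nbr (ε : ℝ) (x : ι → ℝ) (i : ι) : Finset ι :=
  univ.filter fun j => |x j - x i| ≤ ε

noncomputable def step (ε : ℝ) (x : ι → ℝ) (i : ι) : ℝ :=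
  (∑ j ∈ nbr ε x i, x j) / #(nbr ε x i)

theorem mem_nbr {x : ι → ℝ} {i j : ι} : j ∈ nbr ε x i ↔ |x j - x i| ≤ ε := by
  simp [nbr]

theorem self_mem_nbr (hε : 0 ≤ ε) (x : ι → ℝ) (i : ι) : i ∈ nbr ε x i := by
  simpa [mem_nbr] using hε

theorem card_nbr_pos (hε : 0 ≤ ε) (x : ι → ℝ) (i : ι) : (0 : ℝ) < #(nbr ε x i) := by
  exact_mod_cast card_pos.2 ⟨i, self_mem_nbr hε x i⟩

theorem card_nbr_mul_step (hε : 0 ≤ ε) (x : ι → ℝ) (i : ι) :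
    #(nbr ε x i) * step ε x i = ∑ j ∈ nbr ε x i, x j :=
  mul_div_cancel₀ _ (card_nbr_pos hε x i).ne'

theorem step_eq_of_forall_mem_nbr (hε : 0 ≤ ε) {x : ι → ℝ} {i : ι}
    (h : ∀ j ∈ nbr ε x i, x j = x i) : step ε x i = x i := by
  rw [step, sum_congr rfl h, sum_const, nsmul_eq_mul,
    mul_div_cancel_left₀ _ (card_nbr_pos hε x i).ne']

theorem IsSeparated.step_eq (hε : 0 ≤ ε) {x : ι → ℝ} (h : IsSeparated ε x) : step ε x = x :=
  funext fun i => step_eq_of_forall_mem_nbr hε fun j hj =>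
    (h j i).resolve_right (mem_nbr.1 hj).not_gt

theorem isSeparated_step_of_forall_abs_sub_le {x : ι → ℝ} (h : ∀ i j, |x j - x i| ≤ ε) :
    IsSeparated ε (step ε x) := by
  have hnbr : ∀ i, nbr ε x i = univ := fun i => eq_univ_of_forall fun j => mem_nbr.2 (h i j)
  exact fun i j => Or.inl (by rw [step, step, hnbr i, hnbr j])

theorem IsIsolated.step_subtype {p : ι → Prop} [DecidablePred p] {x : ι → ℝ}
    (h : IsIsolated ε p x) (a : {i // p i}) :
    step ε (fun b : {i // p i} => x b) a = step ε x a := by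
  have hnbr : nbr ε x a =
      (nbr ε (fun b : {i // p i} => x b) a).map (Function.Embedding.subtype p) := by
    ext k
    simp only [Finset.mem_map, mem_nbr, Function.Embedding.subtype_apply]
    constructor
    · intro hk
      by_cases hpk : p k
      · exact ⟨⟨k, hpk⟩, hk, rfl⟩
      · exact absurd hk (h a k a.2 hpk).not_ge
    · rintro ⟨b, hb, rfl⟩; exact hb
  rw [step, step, hnbr, sum_map, card_map]
  rfl

noncomputable def energy (ε : ℝ) (x : ι → ℝ) : ℝ :=
  ∑ i, ∑ j, min ((x j - x i) ^ 2) (ε ^ 2)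

theorem energy_nonneg (ε : ℝ) (x : ι → ℝ) : 0 ≤ energy ε x :=
  sum_nonneg fun _ _ => sum_nonneg fun _ _ => le_min (sq_nonneg _) (sq_nonneg _)

theorem energy_step_add_le (hε : 0 ≤ ε) (x : ι → ℝ) :
    energy ε (step ε x) + 4 * ∑ i, (step ε x i - x i) ^ 2 ≤ energy ε x := by
  set A : ι → ι → ℝ := fun i j => if |x j - x i| ≤ ε then 1 else 0
  have hA : ∀ i j, A i j = A j i := fun i j => by simp only [A, abs_sub_comm]
  have hsumA : ∀ i (f : ι → ℝ), ∑ j, A i j * f j = ∑ j ∈ nbr ε x i, f j := fun i f => by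
    simp [A, nbr, sum_filter, ite_mul]
  have hdecr := sum_mul_sq_sub_sq_eq A hA x (step ε x) fun i => by
    have hcard : ∑ j, A i j = #(nbr ε x i) := by simpa using hsumA i 1
    rw [hsumA, hcard, sum_sub_distrib, ← card_nbr_mul_step hε, sum_const, nsmul_eq_mul]
    ring
  have hdiag : 4 * ∑ i, (step ε x i - x i) ^ 2 ≤
      ∑ i, ∑ j, A i j * ((step ε x i - x i) + (step ε x j - x j)) ^ 2 := by
    rw [mul_sum]
    refine sum_le_sum fun i _ => ?_
    have hAii : A i i = 1 := by simp [A, hε]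
    calc 4 * (step ε x i - x i) ^ 2 = A i i * ((step ε x i - x i) + (step ε x i - x i)) ^ 2 := by
          rw [hAii]; ring
      _ ≤ _ := single_le_sum (f := fun j => A i j * ((step ε x i - x i) + (step ε x j - x j)) ^ 2)
          (fun j _ => mul_nonneg (by positivity) (sq_nonneg _)) (mem_univ i)
  have hpoint : energy ε (step ε x) +
      ∑ i, ∑ j, A i j * ((x j - x i) ^ 2 - (step ε x j - step ε x i) ^ 2) ≤ energy ε x := by
    rw [energy, energy, ← sum_add_distrib]
    exact sum_le_sum fun i _ => by
      rw [← sum_add_distrib]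
      exact sum_le_sum fun j _ => min_sq_add_ite_mul_le hε _ _
  linarith

theorem step_le_of_forall_le (hε : 0 ≤ ε) {x : ι → ℝ} {M : ℝ} (hM : ∀ j, x j ≤ M) (i : ι) :
    step ε x i ≤ M := by
  rw [step, div_le_iff₀ (card_nbr_pos hε x i), mul_comm, ← nsmul_eq_mul]
  exact sum_le_card_nsmul _ _ _ fun j _ => hM j

theorem le_step_of_mem_nbr (hε : 0 ≤ ε) {x : ι → ℝ} {m w : ℝ} (hm : ∀ k, m ≤ x k) (hw : m ≤ w)
    {i j : ι} (hj : j ∈ nbr ε x i) (hwj : w ≤ x j) :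
    m + (w - m) / Fintype.card ι ≤ step ε x i := by
  have hN := card_nbr_pos hε x i
  have hshift : step ε x i - m = (∑ k ∈ nbr ε x i, (x k - m)) / #(nbr ε x i) := by
    rw [sum_sub_distrib, sum_const, nsmul_eq_mul, sub_div, mul_div_cancel_left₀ _ hN.ne', step]
  have hcard : (#(nbr ε x i) : ℝ) ≤ Fintype.card ι := by exact_mod_cast card_le_univ _
  have hsum : w - m ≤ ∑ k ∈ nbr ε x i, (x k - m) :=
    (sub_le_sub_right hwj m).trans
      (single_le_sum (f := fun k => x k - m) (fun k _ => sub_nonneg.2 (hm k)) hj)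
  have hdiv := div_le_div₀ (hsum.trans' (sub_nonneg.2 hw)) hsum hN hcard
  linarith

theorem inf'_le_step (hε : 0 ≤ ε) [Nonempty ι] (x : ι → ℝ) (i : ι) :
    univ.inf' univ_nonempty x ≤ step ε x i := by
  have h := le_step_of_mem_nbr hε (fun k => inf'_le x (mem_univ k)) le_rfl
    (self_mem_nbr hε x i) (inf'_le x (mem_univ i))
  rwa [sub_self, zero_div, add_zero] at h

theorem lt_step_of_mem_Icc {δ η : ℝ} (hδ : 0 < δ) (hη : 0 ≤ η)
    (hηδ : η * Fintype.card ι ≤ δ) {y : ι → ℝ} {c : ℝ} (hlow : ∀ k, c - η ≤ y k) {j : ι}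
    (hj : y j ∈ Set.Icc (c + 2 * δ) (c + ε - 2 * δ)) (i : ι) : c < step ε y i := by
  have hε : 0 ≤ ε := by linarith [hj.1, hj.2]
  have : Nonempty ι := ⟨j⟩
  have hn : (1 : ℝ) ≤ Fintype.card ι := by exact_mod_cast Fintype.card_pos
  obtain ⟨k, hk, hky⟩ : ∃ k ∈ nbr ε y i, c + 2 * δ ≤ y k := by
    by_cases hi : c + 2 * δ ≤ y i
    · exact ⟨i, self_mem_nbr hε y i, hi⟩
    · refine ⟨j, mem_nbr.2 (abs_le.2 ⟨?_, ?_⟩), hj.1⟩ <;> nlinarith [hlow i, hj.1, hj.2]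
  have hgain : η < (c + 2 * δ - (c - η)) / Fintype.card ι := by
    rw [lt_div_iff₀ (by positivity)]
    nlinarith
  linarith [le_step_of_mem_nbr hε hlow (by linarith) hk hky]

theorem le_step_of_mem_nbr_of_lt {δ η : ℝ} (hδ : 0 ≤ δ) (hη : 0 ≤ η)
    (hηδ : η * Fintype.card ι ≤ δ) (hδε : (2 * Fintype.card ι + 3) * δ ≤ ε) {y : ι → ℝ} {c : ℝ}
    (hlow : ∀ k, c - η ≤ y k) {i j : ι} (hj : j ∈ nbr ε y i)
    (hjy : c + ε - 2 * δ < y j) : c + 2 * δ ≤ step ε y i := by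
  have hε : 0 ≤ ε := (by positivity : (0 : ℝ) ≤ (2 * Fintype.card ι + 3) * δ).trans hδε
  have : Nonempty ι := ⟨j⟩
  have hn : (1 : ℝ) ≤ Fintype.card ι := by exact_mod_cast Fintype.card_pos
  have hgain : 2 * δ + η ≤ (c + ε - 2 * δ - (c - η)) / Fintype.card ι := by
    rw [le_div_iff₀ (by positivity)]
    nlinarith
  linarith [le_step_of_mem_nbr hε hlow (w := c + ε - 2 * δ) (by nlinarith) hj hjy.le]

section Trajectory

variable {x : ℕ → ι → ℝ}

theorem eventually_abs_sub_lt (hε : 0 ≤ ε) (hx : ∀ t, x (t + 1) = step ε (x t)) {δ : ℝ}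
    (hδ : 0 < δ) : ∀ᶠ t in atTop, ∀ i, |x (t + 1) i - x t i| < δ := by
  set a : ℕ → ℝ := fun t => ∑ i, (x (t + 1) i - x t i) ^ 2
  have ha : ∀ t, 0 ≤ a t := fun t => sum_nonneg fun _ _ => sq_nonneg _
  have hsum : Summable (fun t => 4 * a t) :=
    summable_of_add_le (fun t => energy_nonneg ε (x t)) (fun t => by linarith [ha t])
      fun t => by simpa only [a, hx t] using energy_step_add_le hε (x t)
  have hlim : Tendsto a atTop (𝓝 0) :=
    (hsum.of_nonneg_of_le ha fun t => by linarith [ha t]).tendsto_atTop_zero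
  filter_upwards [(tendsto_order.1 hlim).2 (δ ^ 2) (by positivity)] with t ht i
  refine abs_lt_of_sq_lt_sq (lt_of_le_of_lt ?_ ht) hδ.le
  exact single_le_sum (f := fun i => (x (t + 1) i - x t i) ^ 2) (fun _ _ => sq_nonneg _)
    (mem_univ i)

theorem exists_tendsto_inf' [Nonempty ι] (hε : 0 ≤ ε) (hx : ∀ t, x (t + 1) = step ε (x t)) :
    ∃ c, (∀ t, univ.inf' univ_nonempty (x t) ≤ c) ∧
      Tendsto (fun t => univ.inf' univ_nonempty (x t)) atTop (𝓝 c) := by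
  have hmono : Monotone fun t => univ.inf' univ_nonempty (x t) :=
    monotone_nat_of_le_succ fun t => le_inf' _ _ fun i _ => hx t ▸ inf'_le_step hε (x t) i
  obtain ⟨M, hM⟩ := (Set.finite_range (x 0)).bddAbove
  have hbound : ∀ t i, x t i ≤ M := fun t => by
    induction t with
    | zero => exact fun i => hM ⟨i, rfl⟩
    | succ t ih => rw [hx t]; exact step_le_of_forall_le hε ih
  have hbdd : BddAbove (Set.range fun t => univ.inf' univ_nonempty (x t)) := by
    refine ⟨M, ?_⟩
    rintro _ ⟨t, rfl⟩
    exact (inf'_le _ (mem_univ (Classical.arbitrary ι))).trans (hbound t _)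
  exact ⟨_, fun t => le_ciSup hbdd t, tendsto_atTop_ciSup hmono hbdd⟩

theorem exists_isolated_of_bounds {δ η c : ℝ} (hδ : 0 < δ) (hη : 0 ≤ η)
    (hηδ : η * Fintype.card ι ≤ δ) (hδε : (2 * Fintype.card ι + 3) * δ ≤ ε)
    (hx : ∀ t, x (t + 1) = step ε (x t)) (hjump : ∀ t k, |x (t + 1) k - x t k| < δ)
    (hlow : ∀ t k, c - η ≤ x t k) (hmin : ∀ t, ∃ k, x t k ≤ c)
    (hfar : ∃ i j, ε < |x 0 j - x 0 i|) :
    ∃ p : ι → Prop, (∃ i, p i) ∧ (∃ j, ¬p j) ∧ ∀ t, IsIsolated ε p (x t) := by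
  obtain ⟨i₀, j₀, hfar⟩ := hfar
  have hn : (1 : ℝ) ≤ Fintype.card ι := by exact_mod_cast Fintype.card_pos_iff.2 ⟨i₀⟩
  have hηδ' : η ≤ δ := by nlinarith
  have hgap : ∀ t k, x t k < c + 2 * δ ∨ c + ε - 2 * δ < x t k := fun t k => by
    by_contra! h
    obtain ⟨l, hl⟩ := hmin (t + 1)
    have := lt_step_of_mem_Icc hδ hη hηδ (hlow t) ⟨h.1, h.2⟩ l
    rw [← hx] at this
    linarith
  have hinv : ∀ t k, x t k < c + 2 * δ ↔ x 0 k < c + 2 * δ := fun t k =>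
    lt_iff_lt_of_abs_sub_lt (fun t => (hjump t k).trans_le (by nlinarith)) (fun t => hgap t k) t
  refine ⟨fun k => x 0 k < c + 2 * δ, ?_, ?_, fun t i j hi hj => ?_⟩
  · obtain ⟨k, hk⟩ := hmin 0
    exact ⟨k, by linarith⟩
  · by_contra! h
    have hclose : |x 0 j₀ - x 0 i₀| < 3 * δ :=
      abs_sub_lt_iff.2 ⟨by linarith [hlow 0 i₀, h j₀], by linarith [hlow 0 j₀, h i₀]⟩
    nlinarith
  · by_contra! hle
    have hj' : c + ε - 2 * δ < x t j := (hgap t j).resolve_left fun h => hj ((hinv t j).1 h)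
    have := le_step_of_mem_nbr_of_lt hδ.le hη hηδ hδε (hlow t) (mem_nbr.2 hle) hj'
    rw [← hx] at this
    linarith [(hinv (t + 1) i).2 hi]

theorem exists_isolated [Nonempty ι] (hε : 0 < ε) (hx : ∀ t, x (t + 1) = step ε (x t))
    (hfar : ∀ t, ∃ i j, ε < |x t j - x t i|) :
    ∃ T, ∃ p : ι → Prop, (∃ i, p i) ∧ (∃ j, ¬p j) ∧ ∀ t, IsIsolated ε p (x (T + t)) := by
  set n : ℝ := (Fintype.card ι : ℝ)
  have hn : 0 < n := Nat.cast_pos.2 Fintype.card_pos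
  set δ := ε / (2 * n + 3)
  have hδ : 0 < δ := by positivity
  have hδε : (2 * n + 3) * δ = ε := mul_div_cancel₀ _ (by positivity)
  obtain ⟨c, hmc, hlim⟩ := exists_tendsto_inf' hε.le hx
  obtain ⟨T, hT⟩ := eventually_atTop.1 ((eventually_abs_sub_lt hε.le hx hδ).and
    (hlim.eventually (lt_mem_nhds (sub_lt_self c (div_pos hδ hn)))))
  obtain ⟨p, hp⟩ := exists_isolated_of_bounds (x := fun t => x (T + t)) hδ
    (div_pos hδ hn).le (div_mul_cancel₀ δ hn.ne').le hδε.le (fun t => hx (T + t))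
    (fun t => (hT (T + t) (Nat.le_add_right T t)).1)
    (fun t k => ((hT (T + t) (Nat.le_add_right T t)).2.le.trans (inf'_le _ (mem_univ k))))
    (fun t => by
      obtain ⟨k, -, hk⟩ := exists_mem_eq_inf' univ_nonempty (x (T + t))
      exact ⟨k, hk ▸ hmc _⟩)
    (hfar T)
  exact ⟨T, p, hp⟩

theorem trajectory_subtype {p : ι → Prop} [DecidablePred p] (hx : ∀ t, x (t + 1) = step ε (x t))
    (hiso : ∀ t, IsIsolated ε p (x t)) (t : ℕ) :
    (fun a : {i // p i} => x (t + 1) a) = step ε (fun a : {i // p i} => x t a) :=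
  funext fun a => by rw [(hiso t).step_subtype, hx]

theorem eq_of_isSeparated (hε : 0 ≤ ε) (hx : ∀ t, x (t + 1) = step ε (x t)) {T : ℕ}
    (hT : IsSeparated ε (x T)) {t : ℕ} (ht : T ≤ t) : x t = x T := by
  induction t, ht using Nat.le_induction with
  | base => rfl
  | succ t _ ih => rw [hx, ih, hT.step_eq hε]

end Trajectory

theorem exists_isSeparated (hε : 0 < ε) {x : ℕ → ι → ℝ}
    (hx : ∀ t, x (t + 1) = step ε (x t)) : ∃ T, IsSeparated ε (x T) := by
  refine Fintype.induction_subsingleton_or_nontrivial (P := fun ι _ => ∀ x : ℕ → ι → ℝ,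
    (∀ t, x (t + 1) = step ε (x t)) → ∃ T, IsSeparated ε (x T)) ι ?_ ?_ x hx
  · intro ι _ _ x _
    exact ⟨0, fun i j => Or.inl (by rw [Subsingleton.elim i j])⟩
  · intro ι _ _ ih x hx
    by_cases hcons : ∃ t, ∀ i j, |x t j - x t i| ≤ ε
    · obtain ⟨t, ht⟩ := hcons
      exact ⟨t + 1, hx t ▸ isSeparated_step_of_forall_abs_sub_le ht⟩
    push Not at hcons
    classical
    obtain ⟨T, p, ⟨i, hi⟩, ⟨j, hj⟩, hiso⟩ := exists_isolated hε hx hcons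
    have hp := trajectory_subtype (x := fun t => x (T + t)) (fun t => hx (T + t)) hiso
    have hnp := trajectory_subtype (x := fun t => x (T + t)) (fun t => hx (T + t))
      fun t => (hiso t).not
    obtain ⟨T₁, hT₁⟩ := ih {i // p i} (Fintype.card_subtype_lt hj)
      (fun t a => x (T + t) a) hp
    obtain ⟨T₂, hT₂⟩ := ih {i // ¬p i} (Fintype.card_subtype_lt (not_not.2 hi))
      (fun t a => x (T + t) a) hnp
    refine ⟨T + max T₁ T₂, (hiso _).isSeparated_of_subtype ?_ ?_⟩
    · exact (eq_of_isSeparated (x := fun t (a : {i // p i}) => x (T + t) a) hε.le hp hT₁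
        (le_max_left ..)) ▸ hT₁
    · exact (eq_of_isSeparated (x := fun t (a : {i // ¬p i}) => x (T + t) a) hε.le hnp hT₂
        (le_max_right ..)) ▸ hT₂

end HegselmannKrause

/-- Noise-free HK model: every trajectory reaches a static state in finite time, and the
limit opinions are pairwise either equal or separated by more than `ε`. -/
theorem hk_noise_free_finite_convergence (n : ℕ) (ε : ℝ) (hε : 0 < ε)
    (x : ℕ → Fin n → ℝ)
    (hupd : ∀ t i, x (t + 1) i =
      (∑ j ∈ hkNbr ε (x t) i, x t j) / ((hkNbr ε (x t) i).card : ℝ)) :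
    ∃ (T : ℕ) (xs : Fin n → ℝ),
      (∀ t, T ≤ t → ∀ i, x t i = xs i) ∧
      (∀ i j, xs i = xs j ∨ ε < |xs i - xs j|) := by
  have hx : ∀ t, x (t + 1) = HegselmannKrause.step ε (x t) := fun t => funext (hupd t)
  obtain ⟨T, hT⟩ := HegselmannKrause.exists_isSeparated hε hx
  exact ⟨T, x T, fun t ht => congrFun (HegselmannKrause.eq_of_isSeparated hε.le hx hT ht), hT⟩
end

section
/- Suppose 0 < δ2 ≤ ε, and let T be a random time (a measurable map from the probability space to ℕ ∪ {∞}) such that d_V(T) ≤ ε on the event {T < ∞}. Then almost surely on {T < ∞}, limsup_{t→∞} d_V(t) ≤ δ2. -/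
/-!
Almost surely every noise value lies in `[-δ1, δ2]`, so `|ξ t| ≤ δ2`. Once the opinion diameter is
at most `ε`, every agent is a neighbour of every other one, so all agents move to the same average
and only agent `1` is displaced, by the noise: the next diameter is at most `|ξ| ≤ δ2 ≤ ε`. Hence
from time `T + 1` on the diameter is at most `δ2`.
-/

open MeasureTheory ProbabilityTheory Filter

/-- Noisy HK update: agent `1` (index `0`) additionally receives the noise `ξ`. -/
noncomputable def hkStep {n : ℕ} (ε : ℝ) (x : Fin n → ℝ) (ξ : ℝ) (i : Fin n) : ℝ :=
  (∑ j ∈ hkNbr ε x i, x j) / ((hkNbr ε x i).card : ℝ) + (if (i : ℕ) = 0 then ξ else 0)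

noncomputable def opinionDiam {ι : Type*} (x : ι → ℝ) : ℝ :=
  ⨆ i, ⨆ j, |x i - x j|

section OpinionDiam

variable {ι : Type*} (x : ι → ℝ)

lemma opinionDiam_nonneg : 0 ≤ opinionDiam x :=
  Real.iSup_nonneg fun _ => Real.iSup_nonneg fun _ => abs_nonneg _

lemma abs_sub_le_opinionDiam [Finite ι] (i j : ι) : |x i - x j| ≤ opinionDiam x :=
  (le_ciSup (f := fun j => |x i - x j|) (Finite.bddAbove_range _) j).trans <|
    le_ciSup (f := fun i => ⨆ j, |x i - x j|) (Finite.bddAbove_range _) i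

variable {x}

lemma opinionDiam_le {c : ℝ} (h : ∀ i j, |x i - x j| ≤ c) (hc : 0 ≤ c) : opinionDiam x ≤ c :=
  Real.iSup_le (fun i => Real.iSup_le (h i) hc) hc

end OpinionDiam

section HK

variable {n : ℕ} {ε : ℝ} {x : Fin n → ℝ}

lemma hkNbr_eq_univ {i : Fin n} (h : ∀ j, |x j - x i| ≤ ε) : hkNbr ε x i = Finset.univ := by
  ext j
  simp [hkNbr, h j]

lemma abs_hkStep_sub_hkStep_le (h : ∀ i j, |x i - x j| ≤ ε) (ξ : ℝ) (i j : Fin n) :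
    |hkStep ε x ξ i - hkStep ε x ξ j| ≤ |ξ| := by
  simp only [hkStep, hkNbr_eq_univ fun j => h j _]
  split_ifs <;> simp

lemma opinionDiam_hkStep_le {ξ δ : ℝ} (hx : opinionDiam x ≤ ε) (hξ : |ξ| ≤ δ) :
    opinionDiam (hkStep ε x ξ) ≤ δ :=
  opinionDiam_le
    (fun i j => (abs_hkStep_sub_hkStep_le
      (fun i j => (abs_sub_le_opinionDiam x i j).trans hx) ξ i j).trans hξ)
    ((abs_nonneg ξ).trans hξ)

end HK

lemma eventually_le_of_le_imp_succ_le {α : Type*} [Preorder α] {u : ℕ → α} {a b : α}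
    (hba : b ≤ a) (hstep : ∀ t, u t ≤ a → u (t + 1) ≤ b) {t₀ : ℕ} (h₀ : u t₀ ≤ a) :
    ∀ᶠ t in atTop, u t ≤ b := by
  filter_upwards [eventually_ge_atTop (t₀ + 1)] with t ht
  induction t, ht using Nat.le_induction with
  | base => exact hstep t₀ h₀
  | succ t _ ih => exact hstep t (ih.trans hba)

lemma ae_mem_of_map_eq_smul_restrict {Ω α : Type*} [MeasurableSpace Ω] [MeasurableSpace α]
    {P : Measure Ω} {X : Ω → α} (hX : AEMeasurable X P) {μ : Measure α} {s : Set α}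
    (hs : MeasurableSet s) {c : ENNReal} (hmap : P.map X = c • μ.restrict s) :
    ∀ᵐ ω ∂P, X ω ∈ s :=
  ae_of_ae_map hX <| hmap ▸ Measure.ae_smul_measure (ae_restrict_mem hs) c

theorem hk_phi_consensus_persists_general
    {Ω : Type*} [MeasurableSpace Ω] (P : Measure Ω)
    (n : ℕ) (ε δ1 δ2 : ℝ)
    (hδ12 : δ1 ≤ δ2) (hδ2ε : δ2 ≤ ε)
    -- noise: `ξ t` is the noise injected at the update from time `t` to `t+1`
    (ξ : ℕ → Ω → ℝ) (hξmeas : ∀ t, Measurable (ξ t))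
    (hunif : ∀ t, Measure.map (ξ t) P
      = (ENNReal.ofReal (δ1 + δ2))⁻¹ • volume.restrict (Set.Icc (-δ1) δ2))
    -- trajectory
    (x : Ω → ℕ → Fin n → ℝ)
    (hupd : ∀ ω t i, x ω (t + 1) i = hkStep ε (x ω t) (ξ t ω) i)
    -- opinion diameter
    (d : Ω → ℕ → ℝ)
    (hd : ∀ ω t, d ω t = ⨆ i, ⨆ j, |x ω t i - x ω t j|)
    -- random time
    (T : Ω → ℕ∞)
    (hT : ∀ ω, T ω ≠ ⊤ → d ω (T ω).toNat ≤ ε) :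
    ∀ᵐ ω ∂P, T ω ≠ ⊤ → limsup (fun t => d ω t) atTop ≤ δ2 := by
  have hnoise : ∀ᵐ ω ∂P, ∀ t, ξ t ω ∈ Set.Icc (-δ1) δ2 := ae_all_iff.2 fun t =>
    ae_mem_of_map_eq_smul_restrict (hξmeas t).aemeasurable measurableSet_Icc (hunif t)
  filter_upwards [hnoise] with ω hξ hTω
  have hξ_abs : ∀ t, |ξ t ω| ≤ δ2 := fun t => abs_le.2 ⟨by linarith [(hξ t).1], (hξ t).2⟩
  have hd' : ∀ t, d ω t = opinionDiam (x ω t) := hd ω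
  have hstep : ∀ t, d ω t ≤ ε → d ω (t + 1) ≤ δ2 := fun t ht => by
    rw [hd', funext (hupd ω t)]
    exact opinionDiam_hkStep_le (hd' t ▸ ht) (hξ_abs t)
  refine limsup_le_of_le (isCoboundedUnder_le_of_le atTop (x := 0) fun t => ?_)
    (eventually_le_of_le_imp_succ_le hδ2ε hstep (hT ω hTω))
  exact hd' t ▸ opinionDiam_nonneg _

/-- If `0 < δ2 ≤ ε` and `T` is a random time with `d_V(T) ≤ ε` on `{T < ∞}`, then
almost surely on `{T < ∞}` we have `limsup_t d_V(t) ≤ δ2`. -/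
theorem hk_phi_consensus_persists
    {Ω : Type*} [MeasurableSpace Ω] (P : Measure Ω) [IsProbabilityMeasure P]
    (n : ℕ) (hn : 2 ≤ n) (ε δ1 δ2 : ℝ) (hε : 0 < ε)
    (hδ1 : 0 ≤ δ1) (hδ12 : δ1 ≤ δ2) (hδ2pos : 0 < δ2) (hδ2ε : δ2 ≤ ε)
    -- noise: `ξ t` is the noise injected at the update from time `t` to `t+1`
    (ξ : ℕ → Ω → ℝ) (hξmeas : ∀ t, Measurable (ξ t))
    (hindep : iIndepFun ξ P)
    (hunif : ∀ t, Measure.map (ξ t) P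
      = (ENNReal.ofReal (δ1 + δ2))⁻¹ • volume.restrict (Set.Icc (-δ1) δ2))
    -- trajectory
    (x0 : Fin n → ℝ) (x : Ω → ℕ → Fin n → ℝ)
    (hx0 : ∀ ω, x ω 0 = x0)
    (hupd : ∀ ω t i, x ω (t + 1) i = hkStep ε (x ω t) (ξ t ω) i)
    -- opinion diameter
    (d : Ω → ℕ → ℝ)
    (hd : ∀ ω t, d ω t = ⨆ i, ⨆ j, |x ω t i - x ω t j|)
    -- random time
    (T : Ω → ℕ∞) (hTmeas : Measurable T)
    (hT : ∀ ω, T ω ≠ ⊤ → d ω (T ω).toNat ≤ ε) :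
    ∀ᵐ ω ∂P, T ω ≠ ⊤ → limsup (fun t => d ω t) atTop ≤ δ2 :=
  hk_phi_consensus_persists_general P n ε δ1 δ2 hδ12 hδ2ε ξ hξmeas hunif x hupd d hd T hT
end

section
/- Under the divisive initial condition with ε > 0 and 0 < δ2 ≤ ε/(2n), define the stopping time T = inf{ t : d_V(t) ≤ ε }. If the noise is neutral, i.e., δ1 = δ2, then E[T] = ∞. -/
/-!
While the cluster `V_1` of the noisy agent stays more than `ε` below all other clusters, an HK
step freezes the other clusters and replaces the opinions in `V_1` by their average, plus the new
noise for agent `1`. Hence `V_1` sits at `x_1^* + W_t / K` up to the last noise, where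
`K = |V_1|` and `W_t` is the sum of the first `t` noises, and `d_V(t) ≤ ε` forces `W` to have
climbed to about `K (x_2^* - ε - x_1^*)`. With positive probability the first `2K + 2` noises are
all at most `-δ2 / 2`, after which `W` must climb a fixed positive height; by Wald's identity a
mean-zero random walk with bounded steps needs infinite expected time for that.
-/

open MeasureTheory ProbabilityTheory Filter ENNReal

noncomputable def firstTime (p : ℕ → Prop) : ℝ≥0∞ := ⨅ t ∈ {s | p s}, (t : ℝ≥0∞)

section FirstTime

variable {p : ℕ → Prop}

theorem firstTime_le {t : ℕ} (h : p t) : firstTime p ≤ t := iInf₂_le t h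

theorem le_firstTime {a : ℝ≥0∞} (h : ∀ t, p t → a ≤ t) : a ≤ firstTime p := le_iInf₂ h

theorem lt_firstTime_iff {u : ℕ} : (u : ℝ≥0∞) < firstTime p ↔ ∀ v ≤ u, ¬ p v := by
  constructor
  · intro h v hv hpv
    exact (firstTime_le hpv).trans (Nat.cast_le.mpr hv) |>.not_gt h
  · intro h
    calc (u : ℝ≥0∞) < (u + 1 : ℕ) := Nat.cast_lt.mpr u.lt_succ_self
      _ ≤ firstTime p := le_firstTime fun t ht =>
          Nat.cast_le.mpr (not_le.mp fun htu => h t htu ht)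

theorem exists_firstTime_eq (h : firstTime p ≠ ⊤) : ∃ r, p r ∧ firstTime p = r := by
  classical
  by_cases hex : ∃ t, p t
  · refine ⟨Nat.find hex, Nat.find_spec hex, le_antisymm (firstTime_le (Nat.find_spec hex)) ?_⟩
    exact le_firstTime fun t ht => Nat.cast_le.mpr (Nat.find_min' hex ht)
  · exact absurd (by simp_all [firstTime]) h

theorem tsum_le_firstTime {f : ℕ → ℝ≥0∞} (hf : ∀ u, f u ≤ 1)
    (hf0 : ∀ u : ℕ, firstTime p ≤ u → f u = 0) : ∑' u, f u ≤ firstTime p := by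
  by_cases hp : firstTime p = ⊤
  · exact hp ▸ le_top
  obtain ⟨r, -, hr⟩ := exists_firstTime_eq hp
  rw [hr, tsum_eq_sum (s := Finset.range r) fun u hu =>
    hf0 u (hr ▸ Nat.cast_le.mpr (not_lt.mp (by simpa using hu)))]
  calc ∑ u ∈ Finset.range r, f u ≤ ∑ _u ∈ Finset.range r, 1 := Finset.sum_le_sum fun u _ => hf u
    _ = r := by simp

theorem measurable_firstTime {Ω : Type*} [MeasurableSpace Ω] {p : Ω → ℕ → Prop}
    (hp : ∀ t, MeasurableSet {ω | p ω t}) : Measurable fun ω => firstTime (p ω) := by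
  classical
  refine Measurable.iInf fun t => ?_
  have : (fun ω => ⨅ (_ : t ∈ {s | p ω s}), (t : ℝ≥0∞)) =
      fun ω => if p ω t then (t : ℝ≥0∞) else ⊤ := by
    ext ω
    by_cases h : p ω t <;> simp [h]
  rw [this]
  exact Measurable.ite (hp t) measurable_const measurable_const

theorem measurableSet_lt_firstTime {Ω : Type*} {F : ℕ → MeasurableSpace Ω} (hF : Monotone F)
    {p : Ω → ℕ → Prop} (hp : ∀ v, MeasurableSet[F v] {ω | p ω v}) (u : ℕ) :
    MeasurableSet[F u] {ω | (u : ℝ≥0∞) < firstTime (p ω)} := by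
  have : {ω | (u : ℝ≥0∞) < firstTime (p ω)} = ⋂ v ∈ Finset.range (u + 1), {ω | p ω v}ᶜ := by
    ext ω
    simp [lt_firstTime_iff]
  rw [this]
  exact Finset.measurableSet_biInter _ fun v hv =>
    (hF (Nat.lt_succ_iff.mp (Finset.mem_range.mp hv)) _ (hp v)).compl

end FirstTime

section Past

variable {Ω β : Type*} [MeasurableSpace β] {ξ : ℕ → Ω → β}

abbrev pastSigma (ξ : ℕ → Ω → β) (u : ℕ) : MeasurableSpace Ω :=
  ⨆ v ∈ Set.Iio u, MeasurableSpace.comap (ξ v) inferInstance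

theorem measurable_pastSigma {u v : ℕ} (h : v < u) : Measurable[pastSigma ξ u] (ξ v) :=
  measurable_iff_comap_le.mpr <|
    le_iSup₂ (f := fun v (_ : v ∈ Set.Iio u) => MeasurableSpace.comap (ξ v) inferInstance) v h

theorem pastSigma_mono : Monotone (pastSigma ξ) := fun _ _ h =>
  biSup_mono fun _ hv => lt_of_lt_of_le hv h

theorem pastSigma_le [mΩ : MeasurableSpace Ω] (hξ : ∀ v, Measurable (ξ v)) (u : ℕ) :
    pastSigma ξ u ≤ mΩ :=
  iSup₂_le fun v _ => (hξ v).comap_le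

theorem ProbabilityTheory.iIndepFun.indep_pastSigma [MeasurableSpace Ω] {P : Measure Ω}
    (hξ : ∀ v, Measurable (ξ v)) (hind : iIndepFun ξ P) (u : ℕ) :
    Indep (pastSigma ξ u) (MeasurableSpace.comap (ξ u) inferInstance) P := by
  simpa [pastSigma] using indep_iSup_of_disjoint (fun v => (hξ v).comap_le) hind.iIndep
    (S := Set.Iio u) (T := {u}) (by simp)

end Past

theorem MeasureTheory.integrable_tsum {α E ι : Type*} [MeasurableSpace α] {μ : Measure α}
    [NormedAddCommGroup E] [CompleteSpace E] [Countable ι] {f : ι → α → E}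
    (hf : ∀ i, AEStronglyMeasurable (f i) μ) (hf' : ∑' i, ∫⁻ a, ‖f i a‖ₑ ∂μ ≠ ⊤) :
    Integrable (fun a => ∑' i, f i a) μ := by
  have hlint : ∫⁻ a, ∑' i, ‖f i a‖ₑ ∂μ ≠ ⊤ := by
    rwa [lintegral_tsum fun i => (hf i).enorm]
  have hsum : ∀ᵐ a ∂μ, HasSum (fun i => f i a) (∑' i, f i a) := by
    filter_upwards [ae_lt_top' (AEMeasurable.tsum fun i => (hf i).enorm) hlint] with a ha
    exact (tsum_enorm_ne_top_iff_summable_norm.mp ha.ne).of_norm.hasSum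
  refine ⟨aestronglyMeasurable_of_tendsto_ae _ (fun s => ?_) hsum, ?_⟩
  · exact Finset.aestronglyMeasurable_fun_sum s fun i _ => hf i
  · exact (lintegral_mono fun a => enorm_tsum_le_tsum_enorm).trans_lt hlint.lt_top

section Wald

variable {Ω : Type*} [MeasurableSpace Ω] {P : Measure Ω} {ξ : ℕ → Ω → ℝ} {A : ℕ → Set Ω}

theorem tsum_lintegral_enorm_indicator_ne_top (hA : ∀ u, MeasurableSet (A u)) {C : ℝ}
    (hC : ∀ u, ∀ᵐ ω ∂P, |ξ u ω| ≤ C) (hfin : ∑' u, P (A u) ≠ ⊤) :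
    ∑' u, ∫⁻ ω, ‖(A u).indicator (ξ u) ω‖ₑ ∂P ≠ ⊤ := by
  have hle : ∀ u, ∫⁻ ω, ‖(A u).indicator (ξ u) ω‖ₑ ∂P ≤ ENNReal.ofReal C * P (A u) := by
    intro u
    simp_rw [enorm_indicator_eq_indicator_enorm]
    rw [lintegral_indicator (hA u), ← setLIntegral_const]
    refine setLIntegral_mono_ae measurable_const.aemeasurable ?_
    filter_upwards [hC u] with ω hω _
    rw [Real.enorm_eq_ofReal_abs]
    exact ENNReal.ofReal_le_ofReal hω
  refine ne_top_of_le_ne_top ?_ (ENNReal.tsum_le_tsum hle)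
  rw [ENNReal.tsum_mul_left]
  exact ENNReal.mul_ne_top ENNReal.ofReal_ne_top hfin

/-- A predictable form of Wald's identity. -/
theorem ProbabilityTheory.iIndepFun.integral_tsum_indicator_eq_zero
    (hξ : ∀ u, Measurable (ξ u)) (hind : iIndepFun ξ P) {C : ℝ}
    (hC : ∀ u, ∀ᵐ ω ∂P, |ξ u ω| ≤ C) (hmean : ∀ u, ∫ ω, ξ u ω ∂P = 0)
    (hA : ∀ u, MeasurableSet[pastSigma ξ u] (A u)) (hfin : ∑' u, P (A u) ≠ ⊤) :
    ∫ ω, ∑' u, (A u).indicator (ξ u) ω ∂P = 0 := by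
  have hAm : ∀ u, MeasurableSet (A u) := fun u => pastSigma_le hξ u _ (hA u)
  rw [integral_tsum (fun u => ((hξ u).indicator (hAm u)).aestronglyMeasurable)
    (tsum_lintegral_enorm_indicator_ne_top hAm hC hfin)]
  refine (tsum_congr fun u => ?_).trans tsum_zero
  rw [integral_indicator (hAm u)]
  have := (hind.indep_pastSigma hξ u).setIntegral_eq_mul (f := id)
    (pastSigma_le hξ u) (hξ u).aemeasurable (hA u) aestronglyMeasurable_id
  simpa [hmean u] using this

end Wald

theorem tsum_measure_le_setLIntegral_firstTime {Ω : Type*} [MeasurableSpace Ω] {P : Measure Ω}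
    {p : Ω → ℕ → Prop} {A : ℕ → Set Ω} {D : Set Ω} (hA : ∀ u, MeasurableSet (A u))
    (hD : MeasurableSet D) (hAD : ∀ u, ∀ ω ∈ A u, ω ∈ D ∧ (u : ℝ≥0∞) < firstTime (p ω)) :
    ∑' u, P (A u) ≤ ∫⁻ ω in D, firstTime (p ω) ∂P := by
  calc ∑' u, P (A u) = ∫⁻ ω, ∑' u, (A u).indicator 1 ω ∂P := by
        rw [lintegral_tsum fun u => (measurable_one.indicator (hA u)).aemeasurable]
        exact tsum_congr fun u => (lintegral_indicator_one (hA u)).symm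
    _ ≤ ∫⁻ ω, D.indicator (fun ω => firstTime (p ω)) ω ∂P := lintegral_mono fun ω => by
        by_cases hωD : ω ∈ D
        · rw [Set.indicator_of_mem hωD]
          exact tsum_le_firstTime (fun u => Set.indicator_le_self' (fun _ _ => zero_le_one) ω)
            fun u hu => Set.indicator_of_notMem (fun h => (hAD u ω h).2.not_ge hu) _
        · rw [ENNReal.tsum_eq_zero.mpr fun u =>
            Set.indicator_of_notMem (fun h => hωD (hAD u ω h).1) _]
          exact zero_le
    _ = ∫⁻ ω in D, firstTime (p ω) ∂P := lintegral_indicator hD _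

theorem le_tsum_of_firstTime_ne_top {x : ℕ → ℝ} {m : ℕ} {c : ℝ}
    (h : firstTime (fun v => m ≤ v ∧ c ≤ ∑ u ∈ Finset.Ico m v, x u) ≠ ⊤) :
    c ≤ ∑' u, if m ≤ u ∧ (u : ℝ≥0∞) < firstTime (fun v => m ≤ v ∧ c ≤ ∑ u ∈ Finset.Ico m v, x u)
      then x u else 0 := by
  obtain ⟨r, ⟨-, hcr⟩, hr⟩ := exists_firstTime_eq h
  have hmem : ∀ u, (m ≤ u ∧ (u : ℝ≥0∞) < r) ↔ u ∈ Finset.Ico m r := fun u => by simp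
  simp_rw [hr, hmem]
  rw [tsum_eq_sum (s := Finset.Ico m r) fun u hu => if_neg hu, Finset.sum_ite_mem,
    Finset.inter_self]
  exact hcr

theorem ProbabilityTheory.iIndepFun.setLIntegral_firstTime_sum_Ico_eq_top {Ω : Type*}
    [MeasurableSpace Ω] {P : Measure Ω} [IsFiniteMeasure P] {ξ : ℕ → Ω → ℝ}
    (hξ : ∀ u, Measurable (ξ u)) (hind : iIndepFun ξ P) {C : ℝ}
    (hC : ∀ u, ∀ᵐ ω ∂P, |ξ u ω| ≤ C) (hmean : ∀ u, ∫ ω, ξ u ω ∂P = 0)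
    {m : ℕ} {D : Set Ω} (hD : MeasurableSet[pastSigma ξ m] D) (hPD : P D ≠ 0) {c : ℝ}
    (hc : 0 < c) :
    ∫⁻ ω in D, firstTime (fun v => m ≤ v ∧ c ≤ ∑ u ∈ Finset.Ico m v, ξ u ω) ∂P = ⊤ := by
  set hit : Ω → ℕ → Prop := fun ω v => m ≤ v ∧ c ≤ ∑ u ∈ Finset.Ico m v, ξ u ω
  set ρ : Ω → ℝ≥0∞ := fun ω => firstTime (hit ω)
  have hDm : MeasurableSet D := pastSigma_le hξ m _ hD
  have hhit : ∀ v, MeasurableSet[pastSigma ξ v] {ω | hit ω v} := fun v =>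
    (MeasurableSet.const _).inter <| measurableSet_le measurable_const <|
      Finset.measurable_sum _ fun _ hw => measurable_pastSigma (Finset.mem_Ico.mp hw).2
  -- `A u` is the event that step `u` is taken by the walk restarted at time `m` on `D`.
  set A : ℕ → Set Ω := fun u => {ω | ω ∈ D ∧ m ≤ u ∧ (u : ℝ≥0∞) < ρ ω}
  have hA : ∀ u, MeasurableSet[pastSigma ξ u] (A u) := by
    intro u
    by_cases hmu : m ≤ u
    · have : A u = D ∩ {ω | (u : ℝ≥0∞) < ρ ω} := by ext ω; simp [A, hmu]
      rw [this]
      exact (pastSigma_mono hmu _ hD).inter (measurableSet_lt_firstTime pastSigma_mono hhit u)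
    · have : A u = ∅ := by ext; simp [A, hmu]
      rw [this]
      exact @MeasurableSet.empty Ω (pastSigma ξ u)
  have hAm : ∀ u, MeasurableSet (A u) := fun u => pastSigma_le hξ u _ (hA u)
  -- If `∫⁻ ρ` were finite on `D`, Wald's identity would give `E[1_D (S_ρ - S_m)] = 0`,
  -- although `S_ρ - S_m ≥ c` on `D`.
  by_contra hfin
  have hsum : ∑' u, P (A u) ≠ ⊤ :=
    ne_top_of_le_ne_top hfin (tsum_measure_le_setLIntegral_firstTime hAm hDm
      fun _ _ h => ⟨h.1, h.2.2⟩)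
  have hρfin : ∀ᵐ ω ∂P, ω ∈ D → ρ ω ≠ ⊤ := by
    rw [← ae_restrict_iff' hDm]
    exact (ae_lt_top (measurable_firstTime fun v => pastSigma_le hξ v _ (hhit v)) hfin).mono
      fun _ h => h.ne
  have hlower : D.indicator (fun _ => c) ≤ᵐ[P] fun ω => ∑' u, (A u).indicator (ξ u) ω := by
    filter_upwards [hρfin] with ω hω
    by_cases hωD : ω ∈ D
    · have hA_ite : ∀ u, (A u).indicator (ξ u) ω =
          if m ≤ u ∧ (u : ℝ≥0∞) < ρ ω then ξ u ω else 0 := fun u => by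
        classical
        rw [Set.indicator_apply]
        exact if_congr (and_iff_right hωD) rfl rfl
      rw [Set.indicator_of_mem hωD, tsum_congr hA_ite]
      exact le_tsum_of_firstTime_ne_top (hω hωD)
    · simp [A, hωD]
  have hle := integral_mono_ae ((integrable_const c).indicator hDm)
    (integrable_tsum (fun u => ((hξ u).indicator (hAm u)).aestronglyMeasurable)
      (tsum_lintegral_enorm_indicator_ne_top hAm hC hsum)) hlower
  rw [hind.integral_tsum_indicator_eq_zero hξ hC hmean hA hsum, integral_indicator_const _ hDm,
    smul_eq_mul] at hle
  have hpos : 0 < P.real D * c := mul_pos (ENNReal.toReal_pos hPD (measure_ne_top P D)) hc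
  linarith

section Uniform

variable {Ω : Type*} [MeasurableSpace Ω] {P : Measure Ω}

theorem MeasureTheory.pdf.IsUniform.ae_mem {E : Type*} [MeasurableSpace E] {μ : Measure E}
    {X : Ω → E} {s : Set E} (hX : pdf.IsUniform X s P μ) (hs : MeasurableSet s) (hns : μ s ≠ 0)
    (hnt : μ s ≠ ⊤) : ∀ᵐ ω ∂P, X ω ∈ s := by
  have h := hX.measure_preimage hns hnt hs.compl
  rwa [Set.inter_compl_self, measure_empty, ENNReal.zero_div] at h

theorem MeasureTheory.pdf.IsUniform.integral_eq_zero_of_Icc_neg {X : Ω → ℝ} {a : ℝ}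
    (hX : pdf.IsUniform X (Set.Icc (-a) a) P) (ha : 0 ≤ a) : ∫ ω, X ω ∂P = 0 := by
  rw [hX.integral_eq, integral_Icc_eq_integral_Ioc,
    ← intervalIntegral.integral_of_le (by linarith), integral_id]
  simp

theorem ProbabilityTheory.iIndepFun.measure_biInter_preimage_ne_zero {E ι : Type*}
    [MeasurableSpace E] {μ : Measure E} {ξ : ι → Ω → E} {s B : Set E} (hind : iIndepFun ξ P)
    (hU : ∀ u, pdf.IsUniform (ξ u) s P μ) (hns : μ s ≠ 0) (hnt : μ s ≠ ⊤) (hB : MeasurableSet B)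
    (hsB : μ (s ∩ B) ≠ 0) (S : Finset ι) : P (⋂ u ∈ S, ξ u ⁻¹' B) ≠ 0 := by
  rw [hind.measure_inter_preimage_eq_mul S fun _ _ => hB, Finset.prod_ne_zero_iff]
  intro u _
  rw [(hU u).measure_preimage hns hnt hB]
  exact (ENNReal.div_pos_iff.mpr ⟨hsB, hnt⟩).ne'

theorem ae_forall_mem_Icc_of_isUniform {ι : Type*} [Countable ι] {ξ : ι → Ω → ℝ} {δ : ℝ}
    (hU : ∀ u, pdf.IsUniform (ξ u) (Set.Icc (-δ) δ) P) (hδ : 0 < δ) :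
    ∀ᵐ ω ∂P, ∀ u, ξ u ω ∈ Set.Icc (-δ) δ :=
  ae_all_iff.mpr fun u => (hU u).ae_mem measurableSet_Icc
    (by simpa [Real.volume_Icc] using by linarith) measure_Icc_lt_top.ne

theorem ProbabilityTheory.iIndepFun.measure_biInter_preimage_Icc_ne_zero {ι : Type*}
    {ξ : ι → Ω → ℝ} {δ : ℝ} (hind : iIndepFun ξ P)
    (hU : ∀ u, pdf.IsUniform (ξ u) (Set.Icc (-δ) δ) P) (hδ : 0 < δ) (S : Finset ι) :
    P (⋂ u ∈ S, ξ u ⁻¹' Set.Icc (-δ) (-(δ / 2))) ≠ 0 := by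
  refine hind.measure_biInter_preimage_ne_zero hU (by simpa [Real.volume_Icc] using by linarith)
    measure_Icc_lt_top.ne measurableSet_Icc ?_ S
  rw [Set.inter_eq_right.mpr (Set.Icc_subset_Icc le_rfl (by linarith)), Real.volume_Icc]
  simpa using by linarith

end Uniform

/-- The first `2K + 2` steps push the walk down by at least `(K + 1) δ`, more than the
overshoot `K δ` that `hesc` allows. -/
theorem le_sum_Ico_of_escape {η : ℕ → ℝ} {δ γ : ℝ} {K : ℕ} (hK : 0 < K) (hγ : 0 < γ)
    (hdive : ∀ u < 2 * K + 2, η u ∈ Set.Icc (-δ) (-(δ / 2))) (hle : ∀ u, η u ≤ δ) {s : ℕ}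
    (hesc : γ ≤ (∑ u ∈ Finset.range s, η u) / K ∨ γ ≤ (∑ u ∈ Finset.range s, η u) / K + η s) :
    2 * K + 2 ≤ s ∧ K * γ ≤ ∑ u ∈ Finset.Ico (2 * K + 2) s, η u := by
  have hKpos : (0 : ℝ) < K := Nat.cast_pos.mpr hK
  have hdown : ∀ v ≤ 2 * K + 2, ∑ u ∈ Finset.range v, η u ≤ -(v * (δ / 2)) := fun v hv =>
    calc ∑ u ∈ Finset.range v, η u ≤ ∑ _u ∈ Finset.range v, -(δ / 2) :=
          Finset.sum_le_sum fun u hu => (hdive u ((Finset.mem_range.mp hu).trans_le hv)).2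
      _ = -(v * (δ / 2)) := by simp
  have hδ : 0 ≤ δ := by linarith [(hdive 0 (by omega)).1, (hdive 0 (by omega)).2]
  have hs : 2 * K + 2 ≤ s := by
    by_contra! hs
    have h1 : (∑ u ∈ Finset.range s, η u) / K ≤ 0 :=
      div_nonpos_of_nonpos_of_nonneg ((hdown s hs.le).trans (by simp; positivity)) hKpos.le
    have h2 := (hdive s hs).2
    rcases hesc with h | h <;> linarith
  have hWs : K * γ - K * δ ≤ ∑ u ∈ Finset.range s, η u := by
    have : γ - δ ≤ (∑ u ∈ Finset.range s, η u) / K := by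
      rcases hesc with h | h <;> linarith [hle s]
    rw [le_div_iff₀ hKpos] at this
    linarith
  have hWm := hdown (2 * K + 2) le_rfl
  refine ⟨hs, ?_⟩
  rw [Finset.sum_Ico_eq_sub _ hs]
  push_cast at hWm
  nlinarith

section Clusters

variable {n Nc : ℕ} {ε L b e : ℝ} {Vg : Fin Nc → Finset (Fin n)} {xs : Fin Nc → ℝ} {g0 : Fin Nc}
  {a0 : Fin n} {y : Fin n → ℝ}

structure SeparatedClusters (Vg : Fin Nc → Finset (Fin n)) (xs : Fin Nc → ℝ) (ε : ℝ) : Prop where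
  disjoint : ∀ g h, g ≠ h → Disjoint (Vg g) (Vg h)
  cover : ∀ j, ∃ g, j ∈ Vg g
  sep : ∀ g h, g ≠ h → ε < |xs g - xs h|

theorem separatedClusters_of_gap (hdisj : ∀ g h, g ≠ h → Disjoint (Vg g) (Vg h))
    (hcover : Finset.univ.biUnion Vg = Finset.univ)
    (hgap : ∀ q p : Fin Nc, q < p → ε < xs p - xs q) : SeparatedClusters Vg xs ε where
  disjoint := hdisj
  cover j := (Finset.mem_biUnion.mp (hcover.symm ▸ Finset.mem_univ j)).imp fun _ h => h.2
  sep g h hgh := by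
    rcases lt_or_gt_of_ne hgh with hlt | hlt
    · exact lt_abs.mpr (Or.inr (by linarith [hgap g h hlt]))
    · exact lt_abs.mpr (Or.inl (hgap h g hlt))

theorem monotone_of_gap (hε : 0 ≤ ε) (hgap : ∀ q p : Fin Nc, q < p → ε < xs p - xs q) :
    Monotone xs := fun g h hgh => by
  rcases hgh.eq_or_lt with rfl | hlt
  · exact le_rfl
  · linarith [hgap g h hlt]

def ClusterState (Vg : Fin Nc → Finset (Fin n)) (xs : Fin Nc → ℝ) (g0 : Fin Nc) (a0 : Fin n)
    (y : Fin n → ℝ) (b e : ℝ) : Prop :=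
  (∀ g, g ≠ g0 → ∀ i ∈ Vg g, y i = xs g) ∧ ∀ i ∈ Vg g0, y i = b + if i = a0 then e else 0

theorem ClusterState.abs_sub_le_iff (hy : ClusterState Vg xs g0 a0 y b e)
    (hsep : ∀ g h, g ≠ h → ε < |xs g - xs h|) (hL : ∀ g, g ≠ g0 → L ≤ xs g)
    (he : |e| ≤ ε) (hb : b < L - ε) (hbe : b + e < L - ε)
    {g h : Fin Nc} {i j : Fin n} (hi : i ∈ Vg g) (hj : j ∈ Vg h) :
    |y j - y i| ≤ ε ↔ h = g := by
  have hε : 0 ≤ ε := (abs_nonneg e).trans he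
  have hlow : ∀ k ∈ Vg g0, y k < L - ε := fun k hk => by
    rw [hy.2 k hk]; split_ifs <;> linarith
  rcases eq_or_ne g g0 with rfl | hg <;> rcases eq_or_ne h g with rfl | hhg
  · simp only [iff_true, hy.2 i hi, hy.2 j hj]
    split_ifs <;> simp [hε, he, abs_neg]
  · have := hy.1 h hhg j hj
    have := hL h hhg
    have := hlow i hi
    simp only [hhg, iff_false, not_le]
    exact lt_abs.mpr (Or.inl (by linarith))
  · simp [hy.1 h hg i hi, hy.1 h hg j hj, hε]
  · rw [iff_false_intro hhg, iff_false, not_le]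
    rcases eq_or_ne h g0 with rfl | hh
    · have := hy.1 g hg i hi
      have := hL g hg
      have := hlow j hj
      exact lt_abs.mpr (Or.inr (by linarith))
    · rw [hy.1 g hg i hi, hy.1 h hh j hj]
      exact hsep h g hhg

theorem ClusterState.hkNbr_eq (hy : ClusterState Vg xs g0 a0 y b e)
    (hV : SeparatedClusters Vg xs ε) (hL : ∀ g, g ≠ g0 → L ≤ xs g)
    (he : |e| ≤ ε) (hb : b < L - ε) (hbe : b + e < L - ε) {g : Fin Nc} {i : Fin n}
    (hi : i ∈ Vg g) : hkNbr ε y i = Vg g := by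
  ext j
  obtain ⟨h, hj⟩ := hV.cover j
  simp only [hkNbr, Finset.mem_filter, Finset.mem_univ, true_and,
    hy.abs_sub_le_iff hV.sep hL he hb hbe hi hj]
  refine ⟨fun hhg => hhg ▸ hj, fun hjg => ?_⟩
  by_contra hne
  exact Finset.disjoint_left.mp (hV.disjoint h g hne) hj hjg

theorem ClusterState.step (hy : ClusterState Vg xs g0 a0 y b e)
    (hV : SeparatedClusters Vg xs ε) (hL : ∀ g, g ≠ g0 → L ≤ xs g)
    (ha0 : (a0 : ℕ) = 0) (hagent : a0 ∈ Vg g0)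
    (he : |e| ≤ ε) (hb : b < L - ε) (hbe : b + e < L - ε) (η : ℝ) :
    ClusterState Vg xs g0 a0 (hkStep ε y η) (b + e / (Vg g0).card) η := by
  have hidx : ∀ i : Fin n, (i : ℕ) = 0 ↔ i = a0 := fun i => by rw [Fin.ext_iff, ha0]
  have hnbr := fun {g} {i} (hi : i ∈ Vg g) => hy.hkNbr_eq hV hL he hb hbe hi
  constructor
  · intro g hg i hi
    have hia : i ≠ a0 := by
      rintro rfl
      exact Finset.disjoint_left.mp (hV.disjoint g g0 hg) hi hagent
    have hcard : ((Vg g).card : ℝ) ≠ 0 := Nat.cast_ne_zero.mpr (Finset.card_ne_zero_of_mem hi)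
    rw [hkStep, hnbr hi, Finset.sum_congr rfl (hy.1 g hg), Finset.sum_const, nsmul_eq_mul,
      if_neg ((hidx i).not.mpr hia), mul_div_cancel_left₀ _ hcard, add_zero]
  · intro i hi
    have hcard : ((Vg g0).card : ℝ) ≠ 0 := Nat.cast_ne_zero.mpr (Finset.card_ne_zero_of_mem hi)
    rw [hkStep, hnbr hi, Finset.sum_congr rfl hy.2, Finset.sum_add_distrib,
      Finset.sum_const, nsmul_eq_mul, Finset.sum_ite_eq' _ _ _, if_pos hagent]
    simp only [hidx]
    field_simp

theorem clusterState_initial {y : Fin n → ℝ} (hy : ∀ g, ∀ i ∈ Vg g, y i = xs g) :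
    ClusterState Vg xs g0 a0 y (xs g0) 0 :=
  ⟨fun g _ => hy g, fun i hi => by simp [hy g0 i hi]⟩

theorem clusterState_succ
    (hV : SeparatedClusters Vg xs ε) (hL : ∀ g, g ≠ g0 → L ≤ xs g)
    (ha0 : (a0 : ℕ) = 0) (hagent : a0 ∈ Vg g0)
    {η : ℕ → ℝ} (hη : ∀ u, |η u| ≤ ε) {y : ℕ → Fin n → ℝ}
    (hy0 : ∀ g, ∀ i ∈ Vg g, y 0 i = xs g) (hy : ∀ t i, y (t + 1) i = hkStep ε (y t) (η t) i)
    {t : ℕ} (hlow : ∀ s ≤ t, xs g0 + (∑ u ∈ Finset.range s, η u) / (Vg g0).card < L - ε ∧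
      xs g0 + (∑ u ∈ Finset.range s, η u) / (Vg g0).card + η s < L - ε) :
    ClusterState Vg xs g0 a0 (y (t + 1))
      (xs g0 + (∑ u ∈ Finset.range t, η u) / (Vg g0).card) (η t) := by
  have hstep : y (t + 1) = hkStep ε (y t) (η t) := funext (hy t)
  induction t with
  | zero =>
    have h := (clusterState_initial (g0 := g0) (a0 := a0) hy0).step hV hL ha0
      hagent (abs_zero.trans_le ((abs_nonneg _).trans (hη 0))) (by simpa using (hlow 0 le_rfl).1)
      (by simpa using (hlow 0 le_rfl).1) (η 0)
    simpa [hstep] using h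
  | succ t ih =>
    have h := (ih (fun s hs => hlow s (hs.trans t.le_succ)) (funext (hy t))).step hV hL ha0
      hagent (hη t) (hlow t t.le_succ).1 (hlow t t.le_succ).2 (η (t + 1))
    rw [hstep, Finset.sum_range_succ, add_div, ← add_assoc]
    exact h

theorem ClusterState.lt_iSup_abs_sub (hy : ClusterState Vg xs g0 a0 y b e)
    (hL : ∀ g, g ≠ g0 → L ≤ xs g) (hagent : a0 ∈ Vg g0) (hbe : b + e < L - ε) {g1 : Fin Nc}
    (hg1 : g1 ≠ g0) (hne : (Vg g1).Nonempty) : ε < ⨆ i, ⨆ j, |y i - y j| := by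
  obtain ⟨i1, hi1⟩ := hne
  have h1 : y i1 = xs g1 := hy.1 g1 hg1 i1 hi1
  have h0 : y a0 = b + e := by simp [hy.2 a0 hagent]
  calc ε < |y i1 - y a0| := lt_abs.mpr (Or.inl (by linarith [hL g1 hg1]))
    _ ≤ ⨆ j, |y i1 - y j| := le_ciSup (Set.finite_range fun j => |y i1 - y j|).bddAbove a0
    _ ≤ ⨆ i, ⨆ j, |y i - y j| := le_ciSup (Set.finite_range fun i => ⨆ j, |y i - y j|).bddAbove i1

theorem exists_escape_of_iSup_abs_sub_le
    (hV : SeparatedClusters Vg xs ε) (hL : ∀ g, g ≠ g0 → L ≤ xs g)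
    (h0 : xs g0 < L - ε) {g1 : Fin Nc} (hg1 : g1 ≠ g0) (hne : (Vg g1).Nonempty)
    (ha0 : (a0 : ℕ) = 0) (hagent : a0 ∈ Vg g0)
    {η : ℕ → ℝ} (hη : ∀ u, |η u| ≤ ε) {y : ℕ → Fin n → ℝ}
    (hy0 : ∀ g, ∀ i ∈ Vg g, y 0 i = xs g) (hy : ∀ t i, y (t + 1) i = hkStep ε (y t) (η t) i)
    {t : ℕ} (hdiam : ⨆ i, ⨆ j, |y t i - y t j| ≤ ε) :
    ∃ s < t, L - ε ≤ xs g0 + (∑ u ∈ Finset.range s, η u) / (Vg g0).card ∨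
      L - ε ≤ xs g0 + (∑ u ∈ Finset.range s, η u) / (Vg g0).card + η s := by
  by_contra! hlow
  refine hdiam.not_gt ?_
  cases t with
  | zero =>
    exact (clusterState_initial hy0).lt_iSup_abs_sub hL hagent (by simpa using h0) hg1 hne
  | succ t =>
    exact (clusterState_succ hV hL ha0 hagent hη hy0 hy
      fun s hs => hlow s (Nat.lt_succ_of_le hs)).lt_iSup_abs_sub hL hagent
      (hlow t t.lt_succ_self).2 hg1 hne

theorem firstTime_climb_le_firstTime_iSup_abs_sub_le
    (hV : SeparatedClusters Vg xs ε) (hL : ∀ g, g ≠ g0 → L ≤ xs g)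
    (h0 : xs g0 < L - ε) {g1 : Fin Nc} (hg1 : g1 ≠ g0) (hne : (Vg g1).Nonempty)
    (ha0 : (a0 : ℕ) = 0) (hagent : a0 ∈ Vg g0) {δ : ℝ} (hδε : δ ≤ ε)
    {η : ℕ → ℝ} (hη : ∀ u, η u ∈ Set.Icc (-δ) δ)
    (hdive : ∀ u < 2 * (Vg g0).card + 2, η u ∈ Set.Icc (-δ) (-(δ / 2))) {y : ℕ → Fin n → ℝ}
    (hy0 : ∀ g, ∀ i ∈ Vg g, y 0 i = xs g) (hy : ∀ t i, y (t + 1) i = hkStep ε (y t) (η t) i) :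
    firstTime (fun v => 2 * (Vg g0).card + 2 ≤ v ∧ (Vg g0).card * (L - ε - xs g0) ≤
        ∑ u ∈ Finset.Ico (2 * (Vg g0).card + 2) v, η u) ≤
      firstTime (fun t => ⨆ i, ⨆ j, |y t i - y t j| ≤ ε) := by
  refine le_firstTime fun t ht => ?_
  obtain ⟨s, hst, hesc⟩ := exists_escape_of_iSup_abs_sub_le hV hL h0 hg1 hne ha0 hagent
    (fun u => (abs_le.mpr (hη u)).trans hδε) hy0 hy ht
  obtain ⟨hms, hclimb⟩ := le_sum_Ico_of_escape (Finset.card_pos.mpr ⟨a0, hagent⟩)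
    (sub_pos.mpr h0) hdive (fun u => (hη u).2)
    (hesc.imp sub_le_iff_le_add'.mpr fun h => sub_le_iff_le_add'.mpr (h.trans_eq (add_assoc ..)))
  exact (firstTime_le ⟨hms, hclimb⟩).trans (Nat.cast_le.mpr hst.le)

end Clusters

/-- Under the divisive initial condition, if the noise is neutral (`δ1 = δ2`), then the
stopping time `T = inf { t : d_V(t) ≤ ε }` has infinite expectation. -/
theorem hk_neutral_noise_stopping_time_infinite
    {Ω : Type*} [MeasurableSpace Ω] (P : Measure Ω) [IsProbabilityMeasure P]
    (n : ℕ) (hn : 2 ≤ n) (ε δ1 δ2 : ℝ) (hε : 0 < ε)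
    (hδ2pos : 0 < δ2) (hδ2 : δ2 ≤ ε / (2 * n))
    (hneutral : δ1 = δ2)
    -- noise: `ξ t` is the noise injected at the update from time `t` to `t+1`
    (ξ : ℕ → Ω → ℝ) (hξmeas : ∀ t, Measurable (ξ t))
    (hindep : iIndepFun ξ P)
    (hunif : ∀ t, Measure.map (ξ t) P
      = (ENNReal.ofReal (δ1 + δ2))⁻¹ • volume.restrict (Set.Icc (-δ1) δ2))
    -- divisive initial condition
    (Nc : ℕ) (hNc2 : 2 ≤ Nc)
    (Vg : Fin Nc → Finset (Fin n))
    (hVne : ∀ g, (Vg g).Nonempty)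
    (hVdisj : ∀ g h : Fin Nc, g ≠ h → Disjoint (Vg g) (Vg h))
    (hVcover : Finset.univ.biUnion Vg = (Finset.univ : Finset (Fin n)))
    (xs : Fin Nc → ℝ)
    (hgap : ∀ q p : Fin Nc, q < p → ε < xs p - xs q)
    (hagent1 : (⟨0, by omega⟩ : Fin n) ∈ Vg ⟨0, by omega⟩)
    -- trajectory
    (x : Ω → ℕ → Fin n → ℝ)
    (hx0 : ∀ ω, ∀ g : Fin Nc, ∀ i ∈ Vg g, x ω 0 i = xs g)
    (hupd : ∀ ω t i, x ω (t + 1) i = hkStep ε (x ω t) (ξ t ω) i)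
    -- opinion diameter
    (d : Ω → ℕ → ℝ)
    (hd : ∀ ω t, d ω t = ⨆ i, ⨆ j, |x ω t i - x ω t j|) :
    ∫⁻ ω, (⨅ t ∈ {s : ℕ | d ω s ≤ ε}, (t : ℝ≥0∞)) ∂P = ⊤ := by
  subst δ1
  set g0 : Fin Nc := ⟨0, by omega⟩
  set g1 : Fin Nc := ⟨1, by omega⟩
  set K := (Vg g0).card
  have hg01 : g0 < g1 := Fin.mk_lt_mk.mpr Nat.zero_lt_one
  have hU : ∀ t, pdf.IsUniform (ξ t) (Set.Icc (-δ2) δ2) P := fun t => by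
    rw [pdf.IsUniform, hunif t, ProbabilityTheory.cond, Real.volume_Icc, sub_neg_eq_add]
  have hbound := ae_forall_mem_Icc_of_isUniform hU hδ2pos
  set D : Set Ω := ⋂ u ∈ Finset.range (2 * K + 2), ξ u ⁻¹' Set.Icc (-δ2) (-(δ2 / 2))
  have hD : MeasurableSet[pastSigma ξ (2 * K + 2)] D := Finset.measurableSet_biInter _
    fun u hu => measurable_pastSigma (Finset.mem_range.mp hu) measurableSet_Icc
  have hρ := hindep.setLIntegral_firstTime_sum_Ico_eq_top hξmeas (c := K * (xs g1 - ε - xs g0))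
    (fun u => hbound.mono fun ω hω => abs_le.mpr (hω u))
    (fun u => (hU u).integral_eq_zero_of_Icc_neg hδ2pos.le) hD
    (hindep.measure_biInter_preimage_Icc_ne_zero hU hδ2pos _)
    (mul_pos (Nat.cast_pos.mpr (Finset.card_pos.mpr (hVne g0))) (by linarith [hgap g0 g1 hg01]))
  refine eq_top_iff.mpr <| hρ.symm.le.trans <|
    (setLIntegral_mono_ae' (pastSigma_le hξmeas _ _ hD) ?_).trans (setLIntegral_le_lintegral _ _)
  filter_upwards [hbound] with ω hω hωD
  simp only [hd]
  exact firstTime_climb_le_firstTime_iSup_abs_sub_le (separatedClusters_of_gap hVdisj hVcover hgap)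
    (fun g hg => monotone_of_gap hε.le hgap (Nat.one_le_iff_ne_zero.mpr (Fin.val_ne_of_ne hg)))
    (by linarith [hgap g0 g1 hg01]) (Fin.ne_of_gt hg01) (hVne g1) rfl hagent1
    (hδ2.trans (div_le_self hε.le (by norm_cast; omega))) hω
    (fun u hu => Set.mem_iInter₂.mp hωD u (Finset.mem_range.mpr hu)) (hx0 ω) (hupd ω)
end

section
/- Let (X_t)_{t≥1} be i.i.d. integrable real random variables with E[X_1] = μ ≥ 0 and E[|X_1|] > 0, let S_t = X_1 + ⋯ + X_t, and for c > 0 define T_0 = inf{ t ≥ 1 : S_t ≥ 0 } and T_c = inf{ t ≥ 1 : S_t > c }. If μ = 0 then E[T_c] ≥ E[T_0] = ∞; if μ > 0 then E[T_c] < ∞. -/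
open MeasureTheory ProbabilityTheory ENNReal Finset Filter Topology

/-!
Write `T` for the first exit time of the walk from a set `C` (`C = (-∞, 0)` for `T_0`,
`C = (-∞, c]` for `T_c`). Then `E T = ∑ₙ P(T > n)`, and `{T > n}` depends only on the first `n`
increments, hence is independent of the next one. Summing gives Wald's identity
`E S_{T ∧ N} = E X · ∑_{n < N} P(T > n)`.

If `μ > 0`, truncate the increments at a level `K` that keeps their mean `μ'` positive. This can
only delay `T_c`, and the truncated walk stopped at its exit time is at most `c + K`, so
`E T_c ≤ (c + K) / μ'`.

If `μ = 0` and `E T_0 < ∞`, Wald's identity holds at `T_0` itself, so `E S_{T_0} = 0`. But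
`S_{T_0} ≥ max(X, 0)` for the first increment `X` (the walk exits at once if `X ≥ 0`, and
`S_{T_0} ≥ 0` anyway), and `E max(X, 0) = E|X| / 2 > 0`.
-/

section Walk

variable {Ω : Type*} (X : ℕ → Ω → ℝ) (C : Set ℝ)

def walkStaysIn (n : ℕ) : Set Ω :=
  {ω | ∀ s, 1 ≤ s → s ≤ n → ∑ i ∈ range s, X i ω ∈ C}

/-- `S_{min N T}`, where `T` is the first exit time from `C`. -/
noncomputable def stoppedWalk (N : ℕ) (ω : Ω) : ℝ :=
  ∑ t ∈ range N, (walkStaysIn X C t).indicator (X t) ω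

variable {X C}

@[simp] lemma walkStaysIn_zero : walkStaysIn X C 0 = Set.univ :=
  Set.eq_univ_of_forall fun _ s hs1 hs0 => absurd (hs1.trans hs0) (by norm_num)

lemma walkStaysIn_antitone : Antitone (walkStaysIn X C) :=
  fun _ _ hmn _ hω s hs1 hs => hω s hs1 (hs.trans hmn)

lemma walkStaysIn_mono {D : Set ℝ} (h : C ⊆ D) (n : ℕ) :
    walkStaysIn X C n ⊆ walkStaysIn X D n :=
  fun _ hω s hs1 hs => h (hω s hs1 hs)

lemma walkStaysIn_subset_of_le {Y : ℕ → Ω → ℝ} (hC : IsLowerSet C)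
    (hYX : ∀ t ω, Y t ω ≤ X t ω) (n : ℕ) : walkStaysIn X C n ⊆ walkStaysIn Y C n :=
  fun ω hω s hs1 hs => hC (sum_le_sum fun i _ => hYX i ω) (hω s hs1 hs)

lemma mem_walkStaysIn_succ {n : ℕ} {ω : Ω} :
    ω ∈ walkStaysIn X C (n + 1) ↔ ω ∈ walkStaysIn X C n ∧ ∑ i ∈ range (n + 1), X i ω ∈ C := by
  refine ⟨fun h => ⟨walkStaysIn_antitone n.le_succ h, h _ n.succ_pos le_rfl⟩, ?_⟩
  rintro ⟨h, hn⟩ s hs1 hs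
  rcases hs.lt_or_eq with hs | rfl
  · exact h s hs1 (Nat.lt_succ_iff.1 hs)
  · exact hn

lemma sum_range_mem_of_mem_walkStaysIn (h0 : 0 ∈ C) {n : ℕ} {ω : Ω}
    (h : ω ∈ walkStaysIn X C n) : ∑ i ∈ range n, X i ω ∈ C := by
  rcases n.eq_zero_or_pos with rfl | hn
  · simpa using h0
  · exact h n hn le_rfl

lemma exists_exit_of_notMem_walkStaysIn {n : ℕ} {ω : Ω} (h : ω ∉ walkStaysIn X C n) :
    ∃ k < n, ω ∈ walkStaysIn X C k ∧ ω ∉ walkStaysIn X C (k + 1) := by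
  induction n with
  | zero => simp at h
  | succ n ih =>
    by_cases hn : ω ∈ walkStaysIn X C n
    · exact ⟨n, n.lt_succ_self, hn, h⟩
    · obtain ⟨k, hk, hmem, hexit⟩ := ih hn
      exact ⟨k, hk.trans n.lt_succ_self, hmem, hexit⟩

lemma stoppedWalk_succ (N : ℕ) (ω : Ω) :
    stoppedWalk X C (N + 1) ω = stoppedWalk X C N ω + (walkStaysIn X C N).indicator (X N) ω :=
  sum_range_succ _ _

lemma stoppedWalk_of_mem {N : ℕ} {ω : Ω} (h : ω ∈ walkStaysIn X C N) :
    stoppedWalk X C N ω = ∑ i ∈ range N, X i ω :=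
  sum_congr rfl fun _ ht => Set.indicator_of_mem (walkStaysIn_antitone (mem_range.1 ht).le h) _

lemma stoppedWalk_of_exit {k N : ℕ} {ω : Ω} (hk : ω ∈ walkStaysIn X C k)
    (hexit : ω ∉ walkStaysIn X C (k + 1)) (hkN : k < N) :
    stoppedWalk X C N ω = ∑ i ∈ range (k + 1), X i ω := by
  induction N, hkN using Nat.le_induction with
  | base => rw [stoppedWalk_succ, stoppedWalk_of_mem hk, Set.indicator_of_mem hk, sum_range_succ]
  | succ N hN ih =>
    rw [stoppedWalk_succ, ih, Set.indicator_of_notMem (fun h => hexit (walkStaysIn_antitone hN h)),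
      add_zero]

lemma tsum_indicator_walkStaysIn_eq_stoppedWalk {N : ℕ} {ω : Ω} (h : ω ∉ walkStaysIn X C N) :
    ∑' t, (walkStaysIn X C t).indicator (X t) ω = stoppedWalk X C N ω :=
  tsum_eq_sum fun _ ht => Set.indicator_of_notMem
    (fun hω => h (walkStaysIn_antitone (not_lt.1 (mt mem_range.2 ht)) hω)) _

lemma stoppedWalk_le {c M : ℝ} (hc : 0 ≤ c) (hM : 0 ≤ M) {ω : Ω} (hXM : ∀ t, X t ω ≤ M)
    (N : ℕ) : stoppedWalk X (Set.Iic c) N ω ≤ c + M := by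
  have h0 : (0 : ℝ) ∈ Set.Iic c := hc
  by_cases hN : ω ∈ walkStaysIn X (Set.Iic c) N
  · rw [stoppedWalk_of_mem hN]
    linarith [Set.mem_Iic.1 (sum_range_mem_of_mem_walkStaysIn h0 hN)]
  · obtain ⟨k, hkN, hk, hexit⟩ := exists_exit_of_notMem_walkStaysIn hN
    rw [stoppedWalk_of_exit hk hexit hkN, sum_range_succ]
    linarith [Set.mem_Iic.1 (sum_range_mem_of_mem_walkStaysIn h0 hk), hXM k]

lemma max_zero_le_tsum_indicator_walkStaysIn {ω : Ω}
    (h : ω ∉ ⋂ n, walkStaysIn X (Set.Iio 0) n) :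
    max (X 0 ω) 0 ≤ ∑' t, (walkStaysIn X (Set.Iio 0) t).indicator (X t) ω := by
  obtain ⟨N, hN⟩ : ∃ N, ω ∉ walkStaysIn X (Set.Iio 0) N := by simpa using h
  obtain ⟨k, hkN, hk, hexit⟩ := exists_exit_of_notMem_walkStaysIn hN
  rw [tsum_indicator_walkStaysIn_eq_stoppedWalk hN, stoppedWalk_of_exit hk hexit hkN]
  have hexit' : 0 ≤ ∑ i ∈ range (k + 1), X i ω := by
    simpa using mt (fun h => mem_walkStaysIn_succ.2 ⟨hk, h⟩) hexit
  refine max_le ?_ hexit'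
  rcases k.eq_zero_or_pos with rfl | hk0
  · simp
  · have : X 0 ω < 0 := by simpa using hk 1 le_rfl hk0
    linarith

lemma biInf_natCast_eq_tsum_indicator (A : Set ℕ) :
    ⨅ t ∈ A, (t : ℝ≥0∞) = ∑' n, {n : ℕ | ∀ t ∈ A, n < t}.indicator 1 n := by
  rcases A.eq_empty_or_nonempty with rfl | hA
  · simp
  · have hlb : {n : ℕ | ∀ t ∈ A, n < t} = Set.Iio (sInf A) := by
      ext n
      exact ⟨fun h => h _ (Nat.sInf_mem hA), fun h t ht => h.trans_le (Nat.sInf_le ht)⟩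
    have hinf : ⨅ t ∈ A, (t : ℝ≥0∞) = (sInf A : ℕ) :=
      le_antisymm (iInf₂_le _ (Nat.sInf_mem hA))
        (le_iInf₂ fun t ht => Nat.cast_le.2 (Nat.sInf_le ht))
    rw [hinf, hlb, tsum_eq_sum (s := range (sInf A)) fun n hn => by simp_all,
      sum_congr rfl fun n hn => Set.indicator_of_mem (Set.mem_Iio.2 (mem_range.1 hn)) _]
    simp

lemma biInf_exit_eq_tsum_indicator (ω : Ω) :
    ⨅ t ∈ {t : ℕ | 1 ≤ t ∧ ∑ i ∈ range t, X i ω ∉ C}, (t : ℝ≥0∞)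
      = ∑' n, (walkStaysIn X C n).indicator 1 ω := by
  rw [biInf_natCast_eq_tsum_indicator]
  congr! 2 with n
  have hmem : n ∈ {m : ℕ | ∀ t ∈ {t : ℕ | 1 ≤ t ∧ ∑ i ∈ range t, X i ω ∉ C}, m < t} ↔
      ω ∈ walkStaysIn X C n := by
    refine ⟨fun h s hs1 hs => ?_, fun h t ht => ?_⟩
    · by_contra hsC
      exact (h s ⟨hs1, hsC⟩).not_ge hs
    · by_contra hnt
      exact ht.2 (h t ht.1 (not_lt.1 hnt))
  by_cases h : ω ∈ walkStaysIn X C n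
  · rw [Set.indicator_of_mem (hmem.2 h), Set.indicator_of_mem h, Pi.one_apply, Pi.one_apply]
  · rw [Set.indicator_of_notMem (mt hmem.1 h), Set.indicator_of_notMem h]

end Walk

lemma integrable_tsum_of_summable_integral_norm {α E : Type*} [MeasurableSpace α] {μ : Measure α}
    [NormedAddCommGroup E] [CompleteSpace E] {F : ℕ → α → E}
    (hF_int : ∀ n, Integrable (F n) μ) (hF_sum : Summable fun n ↦ ∫ a, ‖F n a‖ ∂μ) :
    Integrable (fun a ↦ ∑' n, F n a) μ := by
  have hlint : ∑' n, ∫⁻ a, ‖F n a‖ₑ ∂μ ≠ ∞ := by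
    simp_rw [← ofReal_integral_norm_eq_lintegral_enorm (hF_int _)]
    rw [← ENNReal.ofReal_tsum_of_nonneg (fun n => integral_nonneg fun a => norm_nonneg _) hF_sum]
    exact ofReal_ne_top
  rw [← lintegral_tsum fun n => (hF_int n).1.enorm] at hlint
  have hsummable : ∀ᵐ a ∂μ, Summable fun n => F n a := by
    filter_upwards [ae_lt_top' (AEMeasurable.tsum fun n => (hF_int n).1.enorm) hlint]
      with a ha
    exact Summable.of_norm (tsum_enorm_ne_top_iff_summable_norm.1 ha.ne)
  refine ⟨aestronglyMeasurable_of_tendsto_ae atTop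
    (fun N => (integrable_finsetSum (range N) fun n _ => hF_int n).1) ?_, ?_⟩
  · filter_upwards [hsummable] with a ha
    simpa using ha.hasSum.tendsto_sum_nat
  · exact (lintegral_mono fun a => enorm_tsum_le_tsum_enorm).trans_lt hlint.lt_top

section Probability

variable {Ω : Type*} {X : ℕ → Ω → ℝ} {C : Set ℝ}

lemma measurableSet_walkStaysIn_iSup_comap (hC : MeasurableSet C) (n : ℕ) :
    MeasurableSet[⨆ k < n, MeasurableSpace.comap (X k) inferInstance] (walkStaysIn X C n) := by
  have hX : ∀ k < n, Measurable[⨆ k < n, MeasurableSpace.comap (X k) inferInstance] (X k) :=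
    fun k hk => Measurable.of_comap_le
      (le_iSup₂ (f := fun k (_ : k < n) => MeasurableSpace.comap (X k) inferInstance) k hk)
  simp only [walkStaysIn, Set.ofPred_forall]
  exact MeasurableSet.iInter fun s => MeasurableSet.iInter fun _ => MeasurableSet.iInter fun hs =>
    (Finset.measurable_sum _ fun i hi => hX i ((mem_range.1 hi).trans_le hs)) hC

variable [MeasurableSpace Ω] {P : Measure Ω}

lemma iSup_comap_le_of_measurable (hmeas : ∀ t, Measurable (X t)) (n : ℕ) :
    ⨆ k < n, MeasurableSpace.comap (X k) inferInstance ≤ ‹MeasurableSpace Ω› :=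
  iSup₂_le fun k _ => (hmeas k).comap_le

lemma measurableSet_walkStaysIn (hmeas : ∀ t, Measurable (X t)) (hC : MeasurableSet C) (n : ℕ) :
    MeasurableSet (walkStaysIn X C n) :=
  iSup_comap_le_of_measurable hmeas n _ (measurableSet_walkStaysIn_iSup_comap hC n)

lemma lintegral_biInf_exit_eq_tsum (hmeas : ∀ t, Measurable (X t)) (hC : MeasurableSet C) :
    ∫⁻ ω, ⨅ t ∈ {t : ℕ | 1 ≤ t ∧ ∑ i ∈ range t, X i ω ∉ C}, (t : ℝ≥0∞) ∂P
      = ∑' n, P (walkStaysIn X C n) := by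
  have hE := measurableSet_walkStaysIn hmeas hC
  simp_rw [biInf_exit_eq_tsum_indicator]
  rw [lintegral_tsum fun n => (measurable_one.indicator (hE n)).aemeasurable]
  simp_rw [lintegral_indicator_one (hE _)]

lemma ProbabilityTheory.iIndepFun.indep_iSup_comap_lt (hindep : iIndepFun X P)
    (hmeas : ∀ t, Measurable (X t)) (t : ℕ) : Indep (⨆ k < t, MeasurableSpace.comap (X k) inferInstance)
      (MeasurableSpace.comap (X t) inferInstance) P := by
  have := indep_iSup_of_disjoint (fun k => (hmeas k).comap_le) hindep
    (S := {k | k < t}) (T := {t}) (by simp)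
  rwa [_root_.iSup_singleton] at this

lemma setIntegral_walkStaysIn (hmeas : ∀ t, Measurable (X t)) (hindep : iIndepFun X P)
    (hC : MeasurableSet C) (t : ℕ) {f : ℝ → ℝ} (hf : Measurable f) :
    ∫ ω in walkStaysIn X C t, f (X t ω) ∂P = P.real (walkStaysIn X C t) * ∫ ω, f (X t ω) ∂P :=
  (hindep.indep_iSup_comap_lt hmeas t).setIntegral_eq_mul (iSup_comap_le_of_measurable hmeas t)
    (hmeas t).aemeasurable (measurableSet_walkStaysIn_iSup_comap hC t) hf.aestronglyMeasurable

lemma integral_indicator_walkStaysIn (hmeas : ∀ t, Measurable (X t)) (hindep : iIndepFun X P)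
    (hident : ∀ t, IdentDistrib (X t) (X 0) P P) (hC : MeasurableSet C) (t : ℕ) :
    ∫ ω, (walkStaysIn X C t).indicator (X t) ω ∂P
      = P.real (walkStaysIn X C t) * ∫ ω, X 0 ω ∂P := by
  rw [integral_indicator (measurableSet_walkStaysIn hmeas hC t),
    setIntegral_walkStaysIn hmeas hindep hC t (f := fun x => x) measurable_id,
    (hident t).integral_eq]

lemma integral_stoppedWalk (hmeas : ∀ t, Measurable (X t)) (hindep : iIndepFun X P)
    (hident : ∀ t, IdentDistrib (X t) (X 0) P P) (hint : Integrable (X 0) P)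
    (hC : MeasurableSet C) (N : ℕ) :
    ∫ ω, stoppedWalk X C N ω ∂P = (∑ t ∈ range N, P.real (walkStaysIn X C t)) * ∫ ω, X 0 ω ∂P := by
  simp only [stoppedWalk]
  rw [integral_finsetSum _ fun t _ =>
    ((hident t).integrable_iff.2 hint).indicator (measurableSet_walkStaysIn hmeas hC t), sum_mul]
  exact sum_congr rfl fun t _ => integral_indicator_walkStaysIn hmeas hindep hident hC t

lemma integral_tsum_indicator_walkStaysIn (hmeas : ∀ t, Measurable (X t))
    (hindep : iIndepFun X P) (hident : ∀ t, IdentDistrib (X t) (X 0) P P)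
    (hint : Integrable (X 0) P) (hC : MeasurableSet C)
    (hfin : ∑' n, P (walkStaysIn X C n) ≠ ∞) :
    Integrable (fun ω => ∑' t, (walkStaysIn X C t).indicator (X t) ω) P ∧
      ∫ ω, ∑' t, (walkStaysIn X C t).indicator (X t) ω ∂P
        = (∑' t, P.real (walkStaysIn X C t)) * ∫ ω, X 0 ω ∂P := by
  have hE := measurableSet_walkStaysIn hmeas hC
  have hF_int : ∀ t, Integrable ((walkStaysIn X C t).indicator (X t)) P :=
    fun t => ((hident t).integrable_iff.2 hint).indicator (hE t)
  have hF_norm : ∀ t, ∫ ω, ‖(walkStaysIn X C t).indicator (X t) ω‖ ∂P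
      = P.real (walkStaysIn X C t) * ∫ ω, |X 0 ω| ∂P := by
    intro t
    simp_rw [norm_indicator_eq_indicator_norm, Real.norm_eq_abs]
    rw [integral_indicator (hE t), setIntegral_walkStaysIn hmeas hindep hC t measurable_abs]
    exact congrArg _ ((hident t).comp measurable_abs).integral_eq
  have hF_sum : Summable fun t => ∫ ω, ‖(walkStaysIn X C t).indicator (X t) ω‖ ∂P := by
    simp_rw [hF_norm]
    exact (ENNReal.summable_toReal hfin).mul_right _
  refine ⟨integrable_tsum_of_summable_integral_norm hF_int hF_sum, ?_⟩
  rw [← integral_tsum_of_summable_integral_norm hF_int hF_sum, ← tsum_mul_right]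
  exact tsum_congr fun t => integral_indicator_walkStaysIn hmeas hindep hident hC t

lemma tsum_measure_walkStaysIn_Iio_zero_eq_top
    (hmeas : ∀ t, Measurable (X t)) (hindep : iIndepFun X P)
    (hident : ∀ t, IdentDistrib (X t) (X 0) P P) (hint : Integrable (X 0) P)
    (hμ : ∫ ω, X 0 ω ∂P = 0) (habs : 0 < ∫ ω, |X 0 ω| ∂P) :
    ∑' n, P (walkStaysIn X (Set.Iio 0) n) = ∞ := by
  by_contra hfin
  obtain ⟨hint_tsum, hintegral⟩ :=
    integral_tsum_indicator_walkStaysIn hmeas hindep hident hint measurableSet_Iio hfin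
  rw [hμ, mul_zero] at hintegral
  have hnull : P (⋂ n, walkStaysIn X (Set.Iio 0) n) = 0 :=
    le_antisymm (ge_of_tendsto' (ENNReal.tendsto_atTop_zero_of_tsum_ne_top hfin)
      fun n => measure_mono (Set.iInter_subset _ n)) bot_le
  have hle : ∫ ω, max (X 0 ω) 0 ∂P ≤ 0 := by
    refine (integral_mono_ae hint.pos_part hint_tsum ?_).trans hintegral.le
    exact (measure_eq_zero_iff_ae_notMem.1 hnull).mono
      fun _ => max_zero_le_tsum_indicator_walkStaysIn
  have hpos : 0 < ∫ ω, max (X 0 ω) 0 ∂P := by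
    have hhalf : ∀ x : ℝ, max x 0 = (x + |x|) / 2 := fun x => by
      linarith [max_zero_add_max_neg_zero_eq_abs_self x, max_zero_sub_max_neg_zero_eq_self x]
    simp_rw [hhalf]
    rw [integral_div, integral_add hint hint.abs, hμ]
    linarith
  linarith

lemma exists_nat_integral_min_pos {f : Ω → ℝ} (hf : Integrable f P) (h : 0 < ∫ ω, f ω ∂P) :
    ∃ K : ℕ, 0 < ∫ ω, min (f ω) K ∂P := by
  have hlim : Tendsto (fun K : ℕ => ∫ ω, min (f ω) K ∂P) atTop (𝓝 (∫ ω, f ω ∂P)) := by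
    refine tendsto_integral_of_dominated_convergence (fun ω => |f ω|)
      (fun K => hf.1.inf aestronglyMeasurable_const) hf.abs (fun K => ae_of_all _ fun ω => ?_)
      (ae_of_all _ fun ω => ?_)
    · rw [Real.norm_eq_abs, abs_le]
      exact ⟨le_min (neg_abs_le _) ((neg_nonpos.2 (abs_nonneg _)).trans K.cast_nonneg),
        (min_le_left _ _).trans (le_abs_self _)⟩
    · refine tendsto_const_nhds.congr' ((eventually_ge_atTop ⌈f ω⌉₊).mono fun K hK => ?_)
      exact (min_eq_left ((Nat.le_ceil _).trans (Nat.cast_le.2 hK))).symm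
  exact (hlim.eventually (eventually_gt_nhds h)).exists

lemma tsum_measure_walkStaysIn_Iic_le [IsProbabilityMeasure P]
    (hmeas : ∀ t, Measurable (X t)) (hindep : iIndepFun X P)
    (hident : ∀ t, IdentDistrib (X t) (X 0) P P) (hint : Integrable (X 0) P)
    {c M : ℝ} (hc : 0 ≤ c) (hM : 0 ≤ M) (hXM : ∀ t ω, X t ω ≤ M) (hμ : 0 < ∫ ω, X 0 ω ∂P) :
    ∑' n, P (walkStaysIn X (Set.Iic c) n) ≤ ENNReal.ofReal ((c + M) / ∫ ω, X 0 ω ∂P) := by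
  refine ENNReal.tsum_le_of_sum_range_le fun N => ?_
  have hwald : (∑ t ∈ range N, P.real (walkStaysIn X (Set.Iic c) t)) * ∫ ω, X 0 ω ∂P ≤ c + M := by
    have hint_stopped : Integrable (stoppedWalk X (Set.Iic c) N) P :=
      integrable_finsetSum _ fun t _ => ((hident t).integrable_iff.2 hint).indicator
        (measurableSet_walkStaysIn hmeas measurableSet_Iic t)
    rw [← integral_stoppedWalk hmeas hindep hident hint measurableSet_Iic]
    refine (integral_mono hint_stopped (integrable_const (c + M)) fun ω => ?_).trans_eq (by simp)
    exact stoppedWalk_le hc hM (hXM · ω) N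
  rw [ENNReal.le_ofReal_iff_toReal_le (by simp [measure_ne_top]) (by positivity),
    ENNReal.toReal_sum fun t _ => measure_ne_top P _, le_div_iff₀ hμ]
  exact hwald

lemma tsum_measure_walkStaysIn_Iic_lt_top [IsProbabilityMeasure P]
    (hmeas : ∀ t, Measurable (X t)) (hindep : iIndepFun X P)
    (hident : ∀ t, IdentDistrib (X t) (X 0) P P) (hint : Integrable (X 0) P)
    {c : ℝ} (hc : 0 ≤ c) (hμ : 0 < ∫ ω, X 0 ω ∂P) :
    ∑' n, P (walkStaysIn X (Set.Iic c) n) < ∞ := by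
  obtain ⟨K, hK⟩ := exists_nat_integral_min_pos hint hμ
  let Y : ℕ → Ω → ℝ := fun t ω => min (X t ω) K
  have hmin : Measurable fun x : ℝ => min x K := measurable_id.min measurable_const
  calc ∑' n, P (walkStaysIn X (Set.Iic c) n) ≤ ∑' n, P (walkStaysIn Y (Set.Iic c) n) :=
        ENNReal.tsum_le_tsum fun n => measure_mono
          (walkStaysIn_subset_of_le (isLowerSet_Iic c) (fun t ω => min_le_left _ _) n)
    _ ≤ ENNReal.ofReal ((c + K) / ∫ ω, Y 0 ω ∂P) :=
        tsum_measure_walkStaysIn_Iic_le (fun t => hmin.comp (hmeas t))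
          (hindep.comp (fun _ => _) fun _ => hmin) (fun t => (hident t).comp hmin)
          (hint.inf (integrable_const _)) hc K.cast_nonneg (fun t ω => min_le_right _ _) hK
    _ < ∞ := ofReal_lt_top

end Probability

theorem random_walk_hitting_time_expectation_general
    {Ω : Type*} [MeasurableSpace Ω] (P : Measure Ω) [IsProbabilityMeasure P]
    (X : ℕ → Ω → ℝ) (hmeas : ∀ t, Measurable (X t))
    (hindep : iIndepFun X P)
    (hident : ∀ t, IdentDistrib (X t) (X 0) P P)
    (hint : Integrable (X 0) P)
    (μ : ℝ) (hμ : ∫ ω, X 0 ω ∂P = μ)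
    (habs : 0 < ∫ ω, |X 0 ω| ∂P)
    (S : Ω → ℕ → ℝ) (hS : ∀ ω t, S ω t = ∑ i ∈ Finset.range t, X i ω)
    (c : ℝ) (hc : 0 < c) :
    (μ = 0 →
      (∫⁻ ω, (⨅ t ∈ {t : ℕ | 1 ≤ t ∧ 0 ≤ S ω t}, (t : ℝ≥0∞)) ∂P = ⊤ ∧
        ∫⁻ ω, (⨅ t ∈ {t : ℕ | 1 ≤ t ∧ 0 ≤ S ω t}, (t : ℝ≥0∞)) ∂P
          ≤ ∫⁻ ω, (⨅ t ∈ {t : ℕ | 1 ≤ t ∧ c < S ω t}, (t : ℝ≥0∞)) ∂P)) ∧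
    (0 < μ →
      ∫⁻ ω, (⨅ t ∈ {t : ℕ | 1 ≤ t ∧ c < S ω t}, (t : ℝ≥0∞)) ∂P < ⊤) := by
  have hT0 : ∀ ω, {t : ℕ | 1 ≤ t ∧ 0 ≤ S ω t}
      = {t | 1 ≤ t ∧ ∑ i ∈ range t, X i ω ∉ Set.Iio 0} := fun ω => by ext t; simp [hS]
  have hTc : ∀ ω, {t : ℕ | 1 ≤ t ∧ c < S ω t}
      = {t | 1 ≤ t ∧ ∑ i ∈ range t, X i ω ∉ Set.Iic c} := fun ω => by ext t; simp [hS]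
  simp_rw [hT0, hTc, lintegral_biInf_exit_eq_tsum hmeas measurableSet_Iio,
    lintegral_biInf_exit_eq_tsum hmeas measurableSet_Iic]
  subst hμ
  refine ⟨fun hμ0 => ⟨?_, ?_⟩, fun hμpos => ?_⟩
  · exact tsum_measure_walkStaysIn_Iio_zero_eq_top hmeas hindep hident hint hμ0 habs
  · exact ENNReal.tsum_le_tsum fun n => measure_mono
      (walkStaysIn_mono (fun x hx => (Set.mem_Iio.1 hx).le.trans hc.le) n)
  · exact tsum_measure_walkStaysIn_Iic_lt_top hmeas hindep hident hint hc.le hμpos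

/-- For i.i.d. integrable `X` with mean `μ ≥ 0` and `E|X_1| > 0`, the first times
`T_0 = inf {t ≥ 1 : S_t ≥ 0}` and `T_c = inf {t ≥ 1 : S_t > c}` satisfy
`E T_c ≥ E T_0 = ∞` when `μ = 0`, and `E T_c < ∞` when `μ > 0`. -/
theorem random_walk_hitting_time_expectation
    {Ω : Type*} [MeasurableSpace Ω] (P : Measure Ω) [IsProbabilityMeasure P]
    (X : ℕ → Ω → ℝ) (hmeas : ∀ t, Measurable (X t))
    (hindep : iIndepFun X P)
    (hident : ∀ t, IdentDistrib (X t) (X 0) P P)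
    (hint : Integrable (X 0) P)
    (μ : ℝ) (hμ : ∫ ω, X 0 ω ∂P = μ) (hμ0 : 0 ≤ μ)
    (habs : 0 < ∫ ω, |X 0 ω| ∂P)
    (S : Ω → ℕ → ℝ) (hS : ∀ ω t, S ω t = ∑ i ∈ Finset.range t, X i ω)
    (c : ℝ) (hc : 0 < c) :
    (μ = 0 →
      (∫⁻ ω, (⨅ t ∈ {t : ℕ | 1 ≤ t ∧ 0 ≤ S ω t}, (t : ℝ≥0∞)) ∂P = ⊤ ∧
        ∫⁻ ω, (⨅ t ∈ {t : ℕ | 1 ≤ t ∧ 0 ≤ S ω t}, (t : ℝ≥0∞)) ∂P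
          ≤ ∫⁻ ω, (⨅ t ∈ {t : ℕ | 1 ≤ t ∧ c < S ω t}, (t : ℝ≥0∞)) ∂P)) ∧
    (0 < μ →
      ∫⁻ ω, (⨅ t ∈ {t : ℕ | 1 ≤ t ∧ c < S ω t}, (t : ℝ≥0∞)) ∂P < ⊤) :=
  random_walk_hitting_time_expectation_general P X hmeas hindep hident hint μ hμ habs S hS c hc
end

section
/- Let (X_t)_{t≥1} be i.i.d. random variables uniformly distributed on [−δ, δ] with δ > 0, let α > 1, and define Q_1 = X_1 and Q_t = ∑_{i=1}^{t−1} X_i + α·X_t for t ≥ 2. Let T_0' = inf{ t ≥ 1 : Q_t ≥ 0 }. Then E[T_0'] = ∞. -/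
open MeasureTheory ProbabilityTheory ENNReal Finset
open scoped Fin.NatCast

/-!
Fix `m > 2α`. With probability `c > 0` the first `m` steps are all `≤ -δ/2`, which puts the walk
below `-mδ/2 < -αδ`; from there the perturbation `α X_t ≤ αδ` cannot lift `Q_t` to `0` as long as
the partial sums of the following fresh steps stay `≤ 0`. For `k` i.i.d. symmetric steps this has
probability at least `1/(2k)`: the total is `≤ 0` with probability `≥ 1/2` by symmetry, and any
such configuration, rotated to start just after a maximum of its partial sums, has all partial sums
`≤ 0`; as rotations preserve the law, `1/2 ≤ k · P(all partial sums ≤ 0)`. Hence `P(T > m + k) ≥ c/(2k)`, and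
`E T ≥ ∑ₙ P(T > n)` diverges with the harmonic series.
-/

section CycleLemma

variable {k : ℕ} [NeZero k] (y : Fin k → ℝ)

lemma sum_range_natCast_add (a b : ℕ) :
    ∑ i ∈ range (a + b), y i = ∑ i ∈ range a, y i + ∑ i ∈ range b, y (i + a) := by
  rw [sum_range_add]
  simp only [Nat.cast_add, add_comm]

lemma sum_range_natCast_add_period (n : ℕ) :
    ∑ i ∈ range (k + n), y i = ∑ i, y i + ∑ i ∈ range n, y i := by
  rw [sum_range_natCast_add, ← Fin.sum_univ_eq_sum_range (fun i : ℕ => y i)]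
  simp only [Fin.cast_val_eq_self, Fin.natCast_self, add_zero]

lemma exists_isMaxOn_sum_range_natCast (hy : ∑ i, y i ≤ 0) :
    ∃ r : ℕ, ∀ n, ∑ i ∈ range n, y i ≤ ∑ i ∈ range r, y i := by
  obtain ⟨r, -, hr⟩ := exists_max_image (range k) (fun n => ∑ i ∈ range n, y i)
    (nonempty_range_iff.2 (NeZero.ne k))
  refine ⟨r, fun n => ?_⟩
  induction n using Nat.strong_induction_on with
  | _ n ih =>
    rcases lt_or_ge n k with hn | hn
    · exact hr n (mem_range.2 hn)
    · obtain ⟨b, rfl⟩ := Nat.exists_eq_add_of_le hn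
      have := ih b (by have := NeZero.pos k; omega)
      rw [sum_range_natCast_add_period]
      linarith

lemma exists_rotate_sum_range_nonpos (hy : ∑ i, y i ≤ 0) :
    ∃ r : Fin k, ∀ j, ∑ i ∈ range j, y (i + r) ≤ 0 := by
  obtain ⟨r, hr⟩ := exists_isMaxOn_sum_range_natCast y hy
  refine ⟨r, fun j => ?_⟩
  have := sum_range_natCast_add y r j
  linarith [hr (r + j)]

/-- The cast `ℕ → Fin k` reduces mod `k`: these are the partial sums of the `k`-periodic extension
of `y`. -/
def periodicPartialSumsNonpos (k : ℕ) [NeZero k] : Set (Fin k → ℝ) :=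
  {y | ∀ j, ∑ i ∈ range j, y i ≤ 0}

lemma measurableSet_periodicPartialSumsNonpos : MeasurableSet (periodicPartialSumsNonpos k) := by
  simp only [periodicPartialSumsNonpos, Set.ofPred_forall]
  exact MeasurableSet.iInter fun _ => measurableSet_le (by fun_prop) measurable_const

end CycleLemma

lemma one_le_two_mul_measure_sum_nonpos {ι : Type*} [Fintype ι] {ν : Measure ℝ}
    [IsProbabilityMeasure ν] (hν : MeasurePreserving Neg.neg ν ν) :
    1 ≤ 2 * Measure.pi (fun _ : ι => ν) {y | ∑ i, y i ≤ 0} := by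
  set π := Measure.pi (fun _ : ι => ν)
  have hneg : MeasurePreserving (fun y : ι → ℝ => -y) π π := measurePreserving_pi _ _ fun _ => hν
  have hsymm : π {y | 0 ≤ ∑ i, y i} = π {y | ∑ i, y i ≤ 0} := by
    rw [← hneg.measure_preimage (measurableSet_le (by fun_prop) measurable_const).nullMeasurableSet]
    simp
  calc 1 = π ({y | ∑ i, y i ≤ 0} ∪ {y | 0 ≤ ∑ i, y i}) := by
        rw [← measure_univ (μ := π)]
        congr 1
        ext y
        simpa using le_total _ _
    _ ≤ π {y | ∑ i, y i ≤ 0} + π {y | 0 ≤ ∑ i, y i} := measure_union_le _ _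
    _ = 2 * π {y | ∑ i, y i ≤ 0} := by rw [hsymm, two_mul]

lemma inv_two_mul_le_measure_periodicPartialSumsNonpos {k : ℕ} [NeZero k] {ν : Measure ℝ}
    [IsProbabilityMeasure ν] (hν : MeasurePreserving Neg.neg ν ν) :
    (2 * k : ℝ≥0∞)⁻¹ ≤ Measure.pi (fun _ : Fin k => ν) (periodicPartialSumsNonpos k) := by
  set π := Measure.pi (fun _ : Fin k => ν)
  let rotate (r : Fin k) : (Fin k → ℝ) ≃ᵐ (Fin k → ℝ) :=
    MeasurableEquiv.arrowCongr' (Equiv.addRight r).symm (MeasurableEquiv.refl ℝ)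
  have hcover : {y | ∑ i, y i ≤ 0} ⊆ ⋃ r, rotate r ⁻¹' periodicPartialSumsNonpos k := by
    intro y hy
    obtain ⟨r, hr⟩ := exists_rotate_sum_range_nonpos y hy
    exact Set.mem_iUnion.2 ⟨r, hr⟩
  have hrotate (r : Fin k) : π (rotate r ⁻¹' periodicPartialSumsNonpos k) =
      π (periodicPartialSumsNonpos k) :=
    (measurePreserving_arrowCongr' _ _ _ _ fun _ => MeasurePreserving.id ν).measure_preimage
      measurableSet_periodicPartialSumsNonpos.nullMeasurableSet
  have hbound : π {y | ∑ i, y i ≤ 0} ≤ k * π (periodicPartialSumsNonpos k) :=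
    calc π {y | ∑ i, y i ≤ 0} ≤ ∑ r, π (rotate r ⁻¹' periodicPartialSumsNonpos k) :=
          (measure_mono hcover).trans (measure_iUnion_fintype_le _ _)
      _ = k * π (periodicPartialSumsNonpos k) := by simp [hrotate]
  rw [ENNReal.inv_le_iff_le_mul (by simp) (by simp [ENNReal.mul_eq_top]), mul_assoc]
  exact (one_le_two_mul_measure_sum_nonpos hν).trans (by gcongr)

namespace ProbabilityTheory

variable {Ω : Type*} [MeasurableSpace Ω] {P : Measure Ω} {X : ℕ → Ω → ℝ}

lemma iIndepFun.map_pi_comp_eq_pi {ι : Type*} [Fintype ι] (hmeas : ∀ t, Measurable (X t))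
    (hindep : iIndepFun X P) {ν : Measure ℝ} (hX : ∀ t, P.map (X t) = ν) {g : ι → ℕ}
    (hg : g.Injective) :
    P.map (fun ω i => X (g i) ω) = Measure.pi fun _ => ν := by
  have := hindep.isProbabilityMeasure
  rw [(iIndepFun_iff_map_fun_eq_pi_map fun i => (hmeas _).aemeasurable).1 (hindep.precomp hg)]
  simp only [hX]

lemma iIndepFun.indepFun_initial_block (hmeas : ∀ t, Measurable (X t)) (hindep : iIndepFun X P)
    (m k : ℕ) :
    IndepFun (fun ω (i : Fin m) => X i ω) (fun ω (j : Fin k) => X (m + j) ω) P := by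
  have hdisj : Disjoint (range m) (Ico m (m + k)) :=
    disjoint_left.2 fun i hi hi' => by simp only [mem_range, mem_Ico] at hi hi'; omega
  exact (hindep.indepFun_finset _ _ hdisj hmeas).comp
    (φ := fun v (i : Fin m) => v ⟨i, by simp⟩) (ψ := fun v (j : Fin k) => v ⟨m + j, by simp⟩)
    (measurable_pi_lambda _ fun _ => measurable_pi_apply _)
    (measurable_pi_lambda _ fun _ => measurable_pi_apply _)

def initialBlockEvent (X : ℕ → Ω → ℝ) (A : Set ℝ) (m k : ℕ) : Set Ω :=
  {ω | ∀ i < m, X i ω ∈ A} ∩ {ω | ∀ j ≤ k, ∑ i ∈ range j, X (m + i) ω ≤ 0}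

lemma measurableSet_initialBlockEvent (hmeas : ∀ t, Measurable (X t)) {A : Set ℝ}
    (hA : MeasurableSet A) (m k : ℕ) : MeasurableSet (initialBlockEvent X A m k) := by
  simp only [initialBlockEvent, Set.ofPred_forall]
  exact .inter (.iInter fun i => .iInter fun _ => hmeas i hA)
    (.iInter fun j => .iInter fun _ => measurableSet_le (by fun_prop) measurable_const)

lemma iIndepFun.pow_mul_inv_le_measure_initialBlockEvent (hmeas : ∀ t, Measurable (X t))
    (hindep : iIndepFun X P) {ν : Measure ℝ} [IsProbabilityMeasure ν]
    (hν : MeasurePreserving Neg.neg ν ν) (hX : ∀ t, P.map (X t) = ν) {A : Set ℝ}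
    (hA : MeasurableSet A) (m k : ℕ) [NeZero k] :
    ν A ^ m * (2 * k : ℝ≥0∞)⁻¹ ≤ P (initialBlockEvent X A m k) := by
  set initial := fun ω (i : Fin m) => X i ω
  set block := fun ω (j : Fin k) => X (m + j) ω
  have hinitial : P (initial ⁻¹' Set.univ.pi fun _ => A) = ν A ^ m := by
    rw [← Measure.map_apply (by fun_prop) (.univ_pi fun _ => hA),
      hindep.map_pi_comp_eq_pi hmeas hX Fin.val_injective, Measure.pi_pi]
    simp
  have hblock : (2 * k : ℝ≥0∞)⁻¹ ≤ P (block ⁻¹' periodicPartialSumsNonpos k) := by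
    rw [← Measure.map_apply (by fun_prop) measurableSet_periodicPartialSumsNonpos,
      hindep.map_pi_comp_eq_pi hmeas hX fun i j h => Fin.ext (by simpa using h)]
    exact inv_two_mul_le_measure_periodicPartialSumsNonpos hν
  have hsub : initial ⁻¹' (Set.univ.pi fun _ => A) ∩ block ⁻¹' periodicPartialSumsNonpos k ⊆
      initialBlockEvent X A m k := by
    rintro ω ⟨hω, hω'⟩
    refine ⟨fun i hi => hω ⟨i, hi⟩ trivial, fun j hj => ?_⟩
    convert hω' j using 2 with i hi
    simp [block, Fin.val_natCast, Nat.mod_eq_of_lt ((mem_range.1 hi).trans_le hj)]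
  calc ν A ^ m * (2 * k : ℝ≥0∞)⁻¹
      ≤ P (initial ⁻¹' Set.univ.pi fun _ => A) * P (block ⁻¹' periodicPartialSumsNonpos k) := by
        rw [hinitial]; gcongr
    _ = P (initial ⁻¹' (Set.univ.pi fun _ => A) ∩ block ⁻¹' periodicPartialSumsNonpos k) :=
        ((hindep.indepFun_initial_block hmeas m k).measure_inter_preimage_eq_mul _ _
          (.univ_pi fun _ => hA) measurableSet_periodicPartialSumsNonpos).symm
    _ ≤ _ := measure_mono hsub

end ProbabilityTheory

noncomputable def uniformIcc (δ : ℝ) : Measure ℝ :=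
  (ENNReal.ofReal (2 * δ))⁻¹ • volume.restrict (Set.Icc (-δ) δ)

namespace uniformIcc

variable {δ : ℝ}

lemma apply_of_subset {s : Set ℝ} (hs : MeasurableSet s) (hsub : s ⊆ Set.Icc (-δ) δ) :
    uniformIcc δ s = (ENNReal.ofReal (2 * δ))⁻¹ * volume s := by
  rw [uniformIcc, Measure.smul_apply, Measure.restrict_apply hs, Set.inter_eq_left.2 hsub,
    smul_eq_mul]

lemma isProbabilityMeasure (hδ : 0 < δ) : IsProbabilityMeasure (uniformIcc δ) := by
  constructor
  rw [uniformIcc, Measure.smul_apply, Measure.restrict_apply_univ, Real.volume_Icc, smul_eq_mul,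
    sub_neg_eq_add, ← two_mul]
  exact ENNReal.inv_mul_cancel (by positivity) ofReal_ne_top

lemma measurePreserving_neg : MeasurePreserving Neg.neg (uniformIcc δ) (uniformIcc δ) := by
  have h := (Measure.measurePreserving_neg (volume : Measure ℝ)).restrict_preimage
    (measurableSet_Icc (a := -δ) (b := δ))
  rw [Set.neg_preimage, Set.neg_Icc, neg_neg] at h
  refine ⟨measurable_neg, ?_⟩
  rw [uniformIcc, Measure.map_smul, h.map_eq]

lemma ae_le : ∀ᵐ x ∂uniformIcc δ, x ≤ δ :=
  (Measure.ae_smul_measure (ae_restrict_mem measurableSet_Icc) _).mono fun _ hx => hx.2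

lemma Iic_ne_zero (hδ : 0 < δ) : uniformIcc δ (Set.Iic (-(δ / 2))) ≠ 0 := by
  refine (measure_pos_of_superset (Set.Icc_subset_Iic_self (a := -δ)) ?_).ne'
  rw [apply_of_subset measurableSet_Icc (Set.Icc_subset_Icc_right (by linarith)), Real.volume_Icc]
  exact mul_ne_zero (ENNReal.inv_ne_zero.2 ofReal_ne_top) (by simp; linarith)

end uniformIcc

section PerturbedWalk

variable {x : ℕ → ℝ} {α δ : ℝ} {m k : ℕ}

lemma sum_range_add_mul_neg (hα : 0 < α) (hδ : 0 < δ) (hm : 2 * α < m)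
    (hinitial : ∀ i < m, x i ≤ -(δ / 2)) (hle : ∀ i, x i ≤ δ)
    (hblock : ∀ j ≤ k, ∑ i ∈ range j, x (m + i) ≤ 0) {n : ℕ} (hn : n < m + k) :
    ∑ i ∈ range n, x i + α * x n < 0 := by
  rcases lt_or_ge n m with hnm | hnm
  · have hsum : ∑ i ∈ range n, x i ≤ 0 :=
      sum_nonpos fun i hi => (hinitial i ((mem_range.1 hi).trans hnm)).trans (by linarith)
    nlinarith [hinitial n hnm]
  · obtain ⟨j, rfl⟩ := Nat.exists_eq_add_of_le hnm
    have hsum : ∑ i ∈ range m, x i ≤ m * -(δ / 2) := by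
      simpa using sum_le_sum fun i hi => hinitial i (mem_range.1 hi)
    rw [sum_range_add]
    nlinarith [hblock j (by omega), hle (m + j)]

lemma natCast_le_iInf_of_initial_block {q : ℕ → ℝ} (hq1 : q 1 = x 0)
    (hq : ∀ t, 2 ≤ t → q t = ∑ i ∈ range (t - 1), x i + α * x (t - 1))
    (hα : 0 < α) (hδ : 0 < δ) (hm : 2 * α < m)
    (hinitial : ∀ i < m, x i ≤ -(δ / 2)) (hle : ∀ i, x i ≤ δ)
    (hblock : ∀ j ≤ k, ∑ i ∈ range j, x (m + i) ≤ 0) :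
    ((m + k + 1 : ℕ) : ℝ≥0∞) ≤ ⨅ t ∈ {t : ℕ | 1 ≤ t ∧ 0 ≤ q t}, (t : ℝ≥0∞) := by
  refine le_iInf₂ fun t ⟨ht, hqt⟩ => Nat.cast_le.2 (Nat.succ_le_of_lt (lt_of_not_ge fun htk => ?_))
  rcases ht.eq_or_lt with rfl | ht
  · have hm0 : 0 < m := by exact_mod_cast (by linarith : (0 : ℝ) < m)
    linarith [hq1, hinitial 0 hm0]
  · rw [hq t ht] at hqt
    exact (sum_range_add_mul_neg hα hδ hm hinitial hle hblock (by omega)).not_ge hqt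

end PerturbedWalk

lemma tsum_indicator_one_le {α : Type*} {U : ℕ → Set α} {x : α} {a : ℝ≥0∞}
    (h : ∀ n, x ∈ U n → (n + 1 : ℝ≥0∞) ≤ a) : ∑' n, (U n).indicator 1 x ≤ a := by
  have key (N : ℕ) : ∑ n ∈ range N, (U n).indicator 1 x ≤ min a N := by
    induction N with
    | zero => simp
    | succ N ih =>
      rw [sum_range_succ, Nat.cast_succ]
      by_cases hx : x ∈ U N
      · rw [Set.indicator_of_mem hx, Pi.one_apply]
        have hN : ∑ n ∈ range N, (U n).indicator 1 x + 1 ≤ (N + 1 : ℝ≥0∞) := by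
          gcongr; exact ih.trans (min_le_right _ _)
        exact le_min (hN.trans (h N hx)) hN
      · rw [Set.indicator_of_notMem hx, add_zero]
        exact ih.trans (min_le_min_left _ le_self_add)
  exact ENNReal.tsum_le_of_sum_range_le fun N => (key N).trans (min_le_left _ _)

lemma tsum_measure_le_lintegral {α : Type*} [MeasurableSpace α] {μ : Measure α} {f : α → ℝ≥0∞}
    {U : ℕ → Set α} (hU : ∀ n, MeasurableSet (U n))
    (hf : ∀ n, ∀ᵐ x ∂μ, x ∈ U n → (n + 1 : ℝ≥0∞) ≤ f x) :
    ∑' n, μ (U n) ≤ ∫⁻ x, f x ∂μ := by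
  simp_rw [← lintegral_indicator_one (hU _)]
  rw [← lintegral_tsum fun n => (measurable_one.indicator (hU n)).aemeasurable]
  refine lintegral_mono_ae ?_
  filter_upwards [ae_all_iff.2 hf] with x hx
  exact tsum_indicator_one_le hx

lemma ENNReal.tsum_inv_natCast_add_one : ∑' n : ℕ, ((n : ℝ≥0∞) + 1)⁻¹ = ∞ := by
  have h (n : ℕ) : ((n : ℝ≥0∞) + 1)⁻¹ = (((n : NNReal) + 1)⁻¹ : NNReal) := by
    rw [ENNReal.coe_inv (by positivity)]; push_cast; rfl
  simp_rw [h, ENNReal.tsum_coe_eq_top_iff_not_summable_coe, NNReal.coe_inv]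
  push_cast
  exact_mod_cast mt (summable_nat_add_iff 1).1 Real.not_summable_natCast_inv

lemma ENNReal.tsum_mul_inv_two_mul_natCast_succ {c : ℝ≥0∞} (hc : c ≠ 0) :
    ∑' n : ℕ, c * (2 * (n + 1 : ℕ) : ℝ≥0∞)⁻¹ = ∞ := by
  simp_rw [ENNReal.mul_inv (Or.inl two_ne_zero) (Or.inl ofNat_ne_top), ← mul_assoc,
    ENNReal.tsum_mul_left, Nat.cast_succ, ENNReal.tsum_inv_natCast_add_one]
  exact mul_top (mul_ne_zero hc (by simp))

/-- Here `X k` stands for the paper's `X_{k+1}`. -/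
theorem perturbed_random_walk_hitting_time_infinite_general
    {Ω : Type*} [MeasurableSpace Ω] (P : Measure Ω)
    (δ : ℝ) (hδ : 0 < δ) (α : ℝ) (hα : 1 < α)
    (X : ℕ → Ω → ℝ) (hmeas : ∀ t, Measurable (X t))
    (hindep : iIndepFun X P)
    (hunif : ∀ t, Measure.map (X t) P
      = (ENNReal.ofReal (2 * δ))⁻¹ • volume.restrict (Set.Icc (-δ) δ))
    (Q : Ω → ℕ → ℝ)
    (hQ1 : ∀ ω, Q ω 1 = X 0 ω)
    (hQ : ∀ ω t, 2 ≤ t →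
      Q ω t = (∑ i ∈ Finset.range (t - 1), X i ω) + α * X (t - 1) ω) :
    ∫⁻ ω, (⨅ t ∈ {t : ℕ | 1 ≤ t ∧ 0 ≤ Q ω t}, (t : ℝ≥0∞)) ∂P = ⊤ := by
  have hX : ∀ t, P.map (X t) = uniformIcc δ := hunif
  have := uniformIcc.isProbabilityMeasure hδ
  obtain ⟨m, hm⟩ := exists_nat_gt (2 * α)
  set G : ℕ → Set Ω := fun n => initialBlockEvent X (Set.Iic (-(δ / 2))) m (n + 1)
  have hGprob (n : ℕ) :
      uniformIcc δ (Set.Iic (-(δ / 2))) ^ m * (2 * (n + 1 : ℕ) : ℝ≥0∞)⁻¹ ≤ P (G n) :=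
    hindep.pow_mul_inv_le_measure_initialBlockEvent hmeas uniformIcc.measurePreserving_neg hX
      measurableSet_Iic m (n + 1)
  have hbounded : ∀ᵐ ω ∂P, ∀ i, X i ω ≤ δ :=
    ae_all_iff.2 fun i => ae_of_ae_map (hmeas i).aemeasurable (hX i ▸ uniformIcc.ae_le)
  have hGhit (n : ℕ) : ∀ᵐ ω ∂P, ω ∈ G n →
      (n + 1 : ℝ≥0∞) ≤ ⨅ t ∈ {t : ℕ | 1 ≤ t ∧ 0 ≤ Q ω t}, (t : ℝ≥0∞) := by
    filter_upwards [hbounded] with ω hle ⟨hinitial, hblock⟩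
    refine le_trans ?_ (natCast_le_iInf_of_initial_block (hQ1 ω) (hQ ω) (by linarith) hδ hm
      hinitial hle hblock)
    exact_mod_cast (by omega : n + 1 ≤ m + (n + 1) + 1)
  refine top_le_iff.1 ?_
  calc ⊤ = ∑' n : ℕ, uniformIcc δ (Set.Iic (-(δ / 2))) ^ m * (2 * (n + 1 : ℕ) : ℝ≥0∞)⁻¹ :=
        (ENNReal.tsum_mul_inv_two_mul_natCast_succ (pow_ne_zero _ (uniformIcc.Iic_ne_zero hδ))).symm
    _ ≤ ∑' n, P (G n) := ENNReal.tsum_le_tsum hGprob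
    _ ≤ _ := tsum_measure_le_lintegral
        (fun _ => measurableSet_initialBlockEvent hmeas measurableSet_Iic _ _) hGhit

/-- For i.i.d. `X` uniform on `[-δ, δ]` (`δ > 0`), `α > 1`, and
`Q_1 = X_1`, `Q_t = ∑_{i=1}^{t-1} X_i + α X_t` for `t ≥ 2`, the first time
`T_0' = inf {t ≥ 1 : Q_t ≥ 0}` has infinite expectation.
(Here `X k` stands for the paper's `X_{k+1}`.) -/
theorem perturbed_random_walk_hitting_time_infinite
    {Ω : Type*} [MeasurableSpace Ω] (P : Measure Ω) [IsProbabilityMeasure P]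
    (δ : ℝ) (hδ : 0 < δ) (α : ℝ) (hα : 1 < α)
    (X : ℕ → Ω → ℝ) (hmeas : ∀ t, Measurable (X t))
    (hindep : iIndepFun X P)
    (hunif : ∀ t, Measure.map (X t) P
      = (ENNReal.ofReal (2 * δ))⁻¹ • volume.restrict (Set.Icc (-δ) δ))
    (Q : Ω → ℕ → ℝ)
    (hQ1 : ∀ ω, Q ω 1 = X 0 ω)
    (hQ : ∀ ω t, 2 ≤ t →
      Q ω t = (∑ i ∈ Finset.range (t - 1), X i ω) + α * X (t - 1) ω) :
    ∫⁻ ω, (⨅ t ∈ {t : ℕ | 1 ≤ t ∧ 0 ≤ Q ω t}, (t : ℝ≥0∞)) ∂P = ⊤ :=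
  perturbed_random_walk_hitting_time_infinite_general P δ hδ α hα X hmeas hindep hunif Q hQ1 hQ
end
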